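/- arXiv:1112.6284 — 3 statements merged into one kernel-verified Lean document; each statement's English description precedes it below -/
import Mathlib

section
/- Let (G,S) be the Cayley graph of a finitely generated abelian group G = G₁ ⊕ G₂ ≅ ℤ^m ⊕ ⊕_{i=1}^l ℤ_{q_i}, with G₁ the torsion-free part and G₂ the torsion part, and let π_{G₁} : G → G₁ be the natural projection. Then for every d ≥ 0, every f ∈ H^d(G,S) is constant on G₂ (i.e. f(x+w) = f(x) for all x ∈ G and w ∈ G₂), its restriction to G₁ ≅ ℤ^m is the restriction of a polynomial on ℝ^m, and the restriction map gives an identification H^d(G,S) = H^d(G₁, π_{G₁}S). -/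
open MvPolynomial

/-- The discrete Laplacian on the Cayley graph of an abelian group `G` with a finite
(symmetric, listed with possible repetitions, hence a multiset) generating set `S`:
`L^S f x = ∑_{s ∈ S} (f (x + s) - f x)`, counted with multiplicity. -/
def lap {G : Type} [AddCommGroup G] (S : Multiset G) (f : G → ℝ) : G → ℝ := fun x =>
  (S.map fun s => f (x + s) - f x).sum

/-- The squared gradient `|∇f|²(x) = ∑_{s ∈ S} (f (x + s) - f x)²`, with multiplicity. -/
def gradSq {G : Type} [AddCommGroup G] (S : Multiset G) (f : G → ℝ) (x : G) : ℝ :=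
  (S.map fun s => (f (x + s) - f x) ^ 2).sum

/-- The word metric `d^S(x,y)`: the least `k` such that `y - x` is a sum of `k`
elements of `S` (i.e. the combinatorial distance in the Cayley graph). -/
noncomputable def wdist {G : Type} [AddCommGroup G] (S : Multiset G) (x y : G) : ℕ :=
  sInf {k : ℕ | ∃ w : Fin k → G, (∀ i, w i ∈ S) ∧ x + ∑ i, w i = y}

/-- The closed ball `B_R(x) = {y : d^S(x,y) ≤ R}` in the word metric. -/
def ball {G : Type} [AddCommGroup G] (S : Multiset G) (x : G) (R : ℝ) : Set G :=
  {y | (wdist S x y : ℝ) ≤ R}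

/-- The finitely generated abelian group `ℤ^m ⊕ ⊕_{i=1}^l ℤ_{q i}`. -/
abbrev AbG (m l : ℕ) (q : Fin l → ℕ) : Type := (Fin m → ℤ) × (∀ i : Fin l, ZMod (q i))

/-- `H^d(G,S)`: the harmonic functions on `(G,S)` of polynomial growth of order at most `d`
(with respect to a fixed basepoint `p`). -/
noncomputable def HdSet {G : Type} [AddCommGroup G] (S : Multiset G) (p : G) (d : Real) :
    Set (G -> Real) :=
  {u | (forall x, lap S u x = 0) /\
       exists C : Real, forall x, |u x| <= C * ((wdist S p x : Real) + 1) ^ d}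
/-!
Write `ρ = d^S(p, ·)` and `B_n = {ρ ≤ n}`. As `G` is abelian, `#B_n ≤ (n + 1) ^ #S`, so every
`f ∈ H^d` has `∑_{B_n} f² = O(n ^ e)` for some `e`. Caccioppoli's inequality
`∑_{B_n} |∇u|² ≤ 4 #S n⁻² ∑_{B_{2n+1}} u²` for harmonic `u` shows that every difference `Δ_s u`,
`s ∈ S`, which is again harmonic, grows with exponent `e - 2`. After `k > e / 2` steps all
`k`-fold differences along `S` vanish, hence `Δ_g^k f = 0` for every `g ∈ G`.

For `g` of finite order this forces `Δ_g f = 0`, i.e. invariance under the torsion part `G₂`, and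
on `ℤ^m` Newton's forward difference formula in each coordinate makes `f` a polynomial. Finally,
a `G₂`-invariant `f` factors through `π_{G₁}`, and `H^d` is compatible with pulling back along a
surjective homomorphism, which gives the bijection.
-/

open fwdDiff Finset

section FwdDiff

variable {M E : Type*} [AddCommGroup M] [AddCommGroup E]

lemma fwdDiff_neg (h : M) (f : M → E) : Δ_[h] (-f) = -Δ_[h] f := by
  ext x
  simp [fwdDiff]
  abel

lemma fwdDiff_zero_step (f : M → E) : Δ_[(0 : M)] f = 0 := by
  ext x
  simp [fwdDiff]

lemma fwdDiff_add_step (g h : M) (f : M → E) :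
    Δ_[g + h] f = Δ_[g] f + Δ_[h] f + Δ_[g] (Δ_[h] f) := by
  ext x
  simp only [fwdDiff, Pi.add_apply, add_right_comm x g h, ← add_assoc]
  abel

lemma fwdDiff_neg_step (g : M) (f : M → E) :
    Δ_[-g] f = fun x => -Δ_[g] f (x + -g) := by
  ext x
  simp [fwdDiff]

lemma fwdDiff_iter_zero (g : M) (n : ℕ) : Δ_[g] ^[n] (0 : M → E) = 0 :=
  Function.iterate_fixed (fwdDiff_const g 0) n

lemma fwdDiff_iter_comm (g h : M) (m n : ℕ) (f : M → E) :
    Δ_[g] ^[m] (Δ_[h] ^[n] f) = Δ_[h] ^[n] (Δ_[g] ^[m] f) := by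
  have hcomm : Function.Commute (fwdDiff g : (M → E) → M → E) (fwdDiff h) := fun f => by
    ext x
    simp only [fwdDiff, add_right_comm x g h]
    abel
  exact hcomm.iterate_iterate m n f

lemma fwdDiff_iter_comp_addMonoidHom {N : Type*} [AddCommGroup N] (φ : N →+ M) (g : N)
    (n : ℕ) (f : M → E) : Δ_[g] ^[n] (f ∘ φ) = Δ_[φ g] ^[n] f ∘ φ := by
  induction n with
  | zero => rfl
  | succ n ih =>
    rw [Function.iterate_succ_apply', ih, Function.iterate_succ_apply']
    ext x
    simp [fwdDiff]

end FwdDiff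

section DiffsVanish

variable {M E : Type*} [AddCommGroup M] [AddCommGroup E] {T : Set M}

def DiffsVanish (T : Set M) : ℕ → (M → E) → Prop
  | 0, f => f = 0
  | k + 1, f => ∀ s ∈ T, DiffsVanish T k (Δ_[s] f)

lemma diffsVanish_zero (T : Set M) (k : ℕ) : DiffsVanish T k (0 : M → E) := by
  induction k with
  | zero => rfl
  | succ k ih => exact fun s _ => (fwdDiff_const s (0 : E)).symm ▸ ih

namespace DiffsVanish

variable {k : ℕ} {f f' : M → E}

lemma add (hf : DiffsVanish T k f) (hf' : DiffsVanish T k f') : DiffsVanish T k (f + f') := by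
  induction k generalizing f f' with
  | zero => show f + f' = 0; rw [show f = 0 from hf, show f' = 0 from hf', add_zero]
  | succ k ih => exact fun s hs => (fwdDiff_add s f f').symm ▸ ih (hf s hs) (hf' s hs)

lemma neg (hf : DiffsVanish T k f) : DiffsVanish T k (-f) := by
  induction k generalizing f with
  | zero => show -f = 0; rw [show f = 0 from hf, neg_zero]
  | succ k ih => exact fun s hs => (fwdDiff_neg s f).symm ▸ ih (hf s hs)

lemma comp_add_right (hf : DiffsVanish T k f) (c : M) : DiffsVanish T k (fun x => f (x + c)) := by
  induction k generalizing f with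
  | zero => show (fun x => f (x + c)) = 0; rw [show f = 0 from hf]; rfl
  | succ k ih =>
    intro s hs
    have : Δ_[s] (fun x => f (x + c)) = fun x => Δ_[s] f (x + c) :=
      funext (fwdDiff_comp_add s f c)
    exact this ▸ ih (hf s hs)

lemma succ (hf : DiffsVanish T k f) : DiffsVanish T (k + 1) f := by
  induction k generalizing f with
  | zero => intro s _; show Δ_[s] f = 0; rw [show f = 0 from hf]; exact fwdDiff_const s 0
  | succ k ih => exact fun s hs => ih (hf s hs)

lemma fwdDiff_of_mem_closure (hf : DiffsVanish T (k + 1) f) {g : M}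
    (hg : g ∈ AddSubgroup.closure T) :
    DiffsVanish T k (Δ_[g] f) := by
  induction hg using AddSubgroup.closure_induction generalizing k f with
  | mem s hs => exact hf s hs
  | zero => rw [fwdDiff_zero_step]; exact diffsVanish_zero T k
  | add g h _ _ ihg ihh =>
    rw [fwdDiff_add_step]
    refine ((ihg hf).add (ihh hf)).add ?_
    cases k with
    | zero =>
      rw [show Δ_[h] f = 0 from ihh hf, Pi.zero_def, fwdDiff_const]
      rfl
    | succ k => exact (ihg (ihh hf)).succ
  | neg g _ ih => rw [fwdDiff_neg_step]; exact (ih hf).neg.comp_add_right (-g)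

lemma iterate_fwdDiff_eq_zero (hf : DiffsVanish T k f) {g : M}
    (hg : g ∈ AddSubgroup.closure T) : Δ_[g] ^[k] f = 0 := by
  induction k generalizing f with
  | zero => exact hf
  | succ k ih => exact ih (hf.fwdDiff_of_mem_closure hg)

end DiffsVanish

end DiffsVanish

section Newton

variable {M E : Type*} [AddCommGroup M] [AddCommGroup E]

/-- By induction `Δ_g f` is `g`-invariant, and its sum over a period of `g` telescopes to `0`. -/
lemma fwdDiff_eq_zero_of_iterate_eq_zero [IsAddTorsionFree E] {g : M} (hg : IsOfFinAddOrder g)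
    {k : ℕ} {f : M → E} (hf : Δ_[g] ^[k] f = 0) : Δ_[g] f = 0 := by
  induction k generalizing f with
  | zero => rw [show f = 0 from hf]; exact fwdDiff_const g 0
  | succ k ih =>
    have hinv : ∀ x, Δ_[g] f (x + g) = Δ_[g] f x := fun x =>
      sub_eq_zero.1 (congrFun (ih hf) x)
    have hinv' : ∀ (i : ℕ) x, Δ_[g] f (x + i • g) = Δ_[g] f x := fun i x => by
      induction i with
      | zero => simp
      | succ i ih' => rw [succ_nsmul, ← add_assoc, hinv, ih']
    ext x
    have hsum := Finset.sum_range_sub (fun i : ℕ => f (x + i • g)) (addOrderOf g)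
    have hterm : ∀ i : ℕ, f (x + (i + 1) • g) - f (x + i • g) = Δ_[g] f x := fun i => by
      rw [succ_nsmul, ← add_assoc]; exact hinv' i x
    simp only [hterm, sum_const, card_range, addOrderOf_nsmul_eq_zero, add_zero, zero_smul,
      sub_self] at hsum
    exact nsmul_right_injective hg.addOrderOf_pos.ne' (hsum.trans (nsmul_zero _).symm)

/-- Newton's forward difference formula, for negative as well as positive multiples of `g`. -/
lemma shift_zsmul_eq_sum_fwdDiff_iter {g : M} {K : ℕ} {f : M → E} (hf : Δ_[g] ^[K] f = 0)
    (y : M) (t : ℤ) : f (y + t • g) = ∑ i ∈ range K, Ring.choose t i • Δ_[g] ^[i] f y := by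
  induction K generalizing f t with
  | zero => simp [show f = 0 from hf]
  | succ K ih =>
    set h : ℤ → E := fun s => f (y + s • g) - ∑ i ∈ range (K + 1), Ring.choose s i • Δ_[g] ^[i] f y
    have hper : Function.Periodic h 1 := fun s => by
      have hstep : f (y + (s + 1) • g) = f (y + s • g) + Δ_[g] f (y + s • g) := by
        rw [add_smul, one_smul, ← add_assoc]; simp [fwdDiff]
      simp only [h]
      rw [hstep, ih hf s, sum_range_succ' _ K, sum_range_succ' _ K]
      simp only [Ring.choose_succ_succ, add_smul, sum_add_distrib, Ring.choose_zero_right,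
        Function.iterate_succ_apply]
      abel
    have h0 : h 0 = 0 := by
      simp [h, sum_range_succ' _ K, Ring.choose_zero_succ]
    simpa only [smul_eq_mul, mul_one, h0, h, sub_eq_zero] using hper.zsmul_eq t

end Newton

section PolyFunctions

variable {ι : Type*}

variable (ι) in
noncomputable def polyFunctions : Subalgebra ℝ ((ι → ℤ) → ℝ) :=
  (aeval fun j (x : ι → ℤ) => (x j : ℝ)).range

lemma mem_polyFunctions {U : (ι → ℤ) → ℝ} :
    U ∈ polyFunctions ι ↔ ∃ P : MvPolynomial ι ℝ, ∀ x, U x = eval (fun j => (x j : ℝ)) P := by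
  have heval : ∀ (P : MvPolynomial ι ℝ) (x : ι → ℤ),
      aeval (fun j (x : ι → ℤ) => (x j : ℝ)) P x = eval (fun j => (x j : ℝ)) P := fun P x => by
    simpa [coe_aeval_eq_eval] using
      AlgHom.congr_fun (comp_aeval (fun j (x : ι → ℤ) => (x j : ℝ)) (Pi.evalAlgHom ℝ _ x)) P
  simp only [polyFunctions, AlgHom.mem_range, _root_.funext_iff, heval]
  exact exists_congr fun P => forall_congr' fun x => eq_comm

lemma choose_apply_mem_polyFunctions (j : ι) (i : ℕ) :
    (fun x : ι → ℤ => Ring.choose (x j : ℝ) i) ∈ polyFunctions ι := by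
  have hcoord : (fun x : ι → ℤ => (x j : ℝ)) ∈ polyFunctions ι := ⟨X j, aeval_X _ j⟩
  have hprod : (fun x : ι → ℤ => Ring.choose (x j : ℝ) i) =
      (i.factorial : ℝ)⁻¹ • ∏ t ∈ range i, ((fun x : ι → ℤ => (x j : ℝ)) - algebraMap ℝ _ t) := by
    ext x
    rw [Ring.choose_eq_smul, ← Polynomial.aeval_eq_smeval, Polynomial.aeval_def,
      Polynomial.eval₂_eq_eval_map, descPochhammer_map, descPochhammer_eval_eq_prod_range]
    simp [Finset.prod_apply]
  rw [hprod]
  exact Subalgebra.smul_mem _ (Subalgebra.prod_mem _ fun t _ =>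
    Subalgebra.sub_mem _ hcoord (Subalgebra.algebraMap_mem _ _)) _

/-- Induction on the set `s` of free coordinates, expanding by Newton's formula in each new one. -/
lemma piecewise_mem_polyFunctions [DecidableEq ι] {K : ℕ} (s : Finset ι) :
    ∀ U : (ι → ℤ) → ℝ, (∀ j, Δ_[Pi.single j 1] ^[K] U = 0) →
      (fun x => U (s.piecewise x 0)) ∈ polyFunctions ι := by
  induction s using Finset.induction_on with
  | empty =>
    intro U _
    convert (polyFunctions ι).algebraMap_mem (U 0) using 1
    ext x
    simp
  | insert j s hj ih =>
    intro U hU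
    have hsplit : ∀ x : ι → ℤ,
        (insert j s).piecewise x 0 = s.piecewise x 0 + x j • Pi.single j 1 := fun x => by
      ext i
      by_cases hi : i = j
      · subst hi; simp [hj]
      · simp [hi, Finset.piecewise]
    have hexpand : (fun x => U ((insert j s).piecewise x 0)) =
        ∑ i ∈ range K, (fun x : ι → ℤ => Ring.choose (x j : ℝ) i) *
          fun x => Δ_[Pi.single j 1] ^[i] U (s.piecewise x 0) := by
      ext x
      rw [hsplit, shift_zsmul_eq_sum_fwdDiff_iter (hU j)]
      have hcast (t : ℤ) (i : ℕ) : ((Ring.choose t i : ℤ) : ℝ) = Ring.choose (t : ℝ) i := by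
        simpa using Ring.map_choose (Int.castRingHom ℝ) t i
      simp [Finset.sum_apply, zsmul_eq_mul, hcast]
    rw [hexpand]
    refine Subalgebra.sum_mem _ fun i _ => Subalgebra.mul_mem _
      (choose_apply_mem_polyFunctions j i) (ih _ fun j' => ?_)
    rw [fwdDiff_iter_comm, hU j', fwdDiff_iter_zero]

lemma mem_polyFunctions_of_fwdDiff_iter [Fintype ι] [DecidableEq ι] {K : ℕ}
    {U : (ι → ℤ) → ℝ} (hU : ∀ j, Δ_[Pi.single j 1] ^[K] U = 0) : U ∈ polyFunctions ι := by
  simpa using piecewise_mem_polyFunctions Finset.univ U hU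

end PolyFunctions

section WordMetric

variable {G H : Type} [AddCommGroup G] [AddCommGroup H] {S : Multiset G}

lemma neg_mem_of_map_neg_eq (hsym : S.map (fun s => -s) = S) {s : G} (hs : s ∈ S) : -s ∈ S :=
  hsym ▸ Multiset.mem_map_of_mem _ hs

lemma addSubmonoid_closure_eq_top (hsym : S.map (fun s => -s) = S)
    (hgen : AddSubgroup.closure {s : G | s ∈ S} = ⊤) :
    AddSubmonoid.closure {s : G | s ∈ S} = ⊤ := by
  have hneg : -{s : G | s ∈ S} = {s | s ∈ S} := by
    ext s
    exact ⟨fun hs => neg_neg s ▸ neg_mem_of_map_neg_eq hsym hs, neg_mem_of_map_neg_eq hsym⟩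
  rw [← Set.union_self {s : G | s ∈ S}, ← congrArg (· ∪ {s : G | s ∈ S}) hneg, Set.union_comm,
    ← AddSubgroup.closure_toAddSubmonoid, hgen, AddSubgroup.top_toAddSubmonoid]

lemma wdist_le {k : ℕ} {w : Fin k → G} (hw : ∀ i, w i ∈ S) {x y : G} (h : x + ∑ i, w i = y) :
    wdist S x y ≤ k :=
  Nat.sInf_le ⟨w, hw, h⟩

@[simp] lemma wdist_self (x : G) : wdist S x x = 0 :=
  Nat.le_zero.1 (wdist_le (w := Fin.elim0) (fun i => i.elim0) (by simp))

lemma exists_word_wdist (hS : AddSubmonoid.closure {s : G | s ∈ S} = ⊤) (x y : G) :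
    ∃ w : Fin (wdist S x y) → G, (∀ i, w i ∈ S) ∧ x + ∑ i, w i = y := by
  have hyx : y - x ∈ AddSubmonoid.closure {s : G | s ∈ S} := hS ▸ AddSubmonoid.mem_top _
  obtain ⟨l, hl, hsum⟩ := AddSubmonoid.exists_list_of_mem_closure hyx
  refine Nat.sInf_mem (s := {k | ∃ w : Fin k → G, (∀ i, w i ∈ S) ∧ x + ∑ i, w i = y})
    ⟨l.length, l.get, fun i => hl _ (List.get_mem l i), ?_⟩
  rw [← List.sum_ofFn, List.ofFn_get, hsum, add_sub_cancel]

lemma wdist_add_le (hS : AddSubmonoid.closure {s : G | s ∈ S} = ⊤) {s : G} (hs : s ∈ S) (x y : G) :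
    wdist S x (y + s) ≤ wdist S x y + 1 := by
  obtain ⟨w, hw, hxy⟩ := exists_word_wdist hS x y
  refine wdist_le (w := Fin.cons s w) (fun i => Fin.cases hs hw i) ?_
  rw [Fin.sum_cons, add_left_comm, hxy, add_comm]

lemma abs_wdist_add_sub_le (hS : AddSubmonoid.closure {s : G | s ∈ S} = ⊤)
    (hsym : S.map (fun s => -s) = S) {s : G} (hs : s ∈ S) (x y : G) :
    |(wdist S x (y + s) : ℝ) - wdist S x y| ≤ 1 := by
  have h₁ : (wdist S x (y + s) : ℝ) ≤ wdist S x y + 1 := by exact_mod_cast wdist_add_le hS hs x y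
  have h₂ : (wdist S x y : ℝ) ≤ wdist S x (y + s) + 1 := by
    have := wdist_add_le hS (neg_mem_of_map_neg_eq hsym hs) x (y + s)
    rw [add_neg_cancel_right] at this
    exact_mod_cast this
  rw [abs_le]
  constructor <;> linarith

lemma wdist_map_le (hS : AddSubmonoid.closure {s : G | s ∈ S} = ⊤) (φ : G →+ H) (x y : G) :
    wdist (S.map φ) (φ x) (φ y) ≤ wdist S x y := by
  obtain ⟨w, hw, hxy⟩ := exists_word_wdist hS x y
  exact wdist_le (w := φ ∘ w) (fun i => Multiset.mem_map_of_mem φ (hw i))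
    (by simp [← map_sum, ← map_add, hxy])

lemma exists_wdist_le_of_map (hS : AddSubmonoid.closure {s : G | s ∈ S} = ⊤) (φ : G →+ H)
    (hφ : Function.Surjective φ) (x : G) (y' : H) :
    ∃ y, φ y = y' ∧ wdist S x y ≤ wdist (S.map φ) (φ x) y' := by
  have hS' : AddSubmonoid.closure {t : H | t ∈ S.map φ} = ⊤ := by
    have himage : {t : H | t ∈ S.map φ} = φ '' {s | s ∈ S} := by ext; simp
    rw [himage, ← AddMonoidHom.map_mclosure, hS, ← AddMonoidHom.mrange_eq_map,
      AddMonoidHom.mrange_eq_top.2 hφ]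
  obtain ⟨w', hw', hxy⟩ := exists_word_wdist hS' (φ x) y'
  choose w hwS hw using fun i => Multiset.mem_map.1 (hw' i)
  exact ⟨x + ∑ i, w i, by simp [map_sum, hw, hxy], wdist_le hwS rfl⟩

/-- Since `G` is abelian, every point at distance `≤ n` from `p` is `p + ∑ c s • s` with
multiplicities `c s ≤ n`. -/
noncomputable def ballFinset (S : Multiset G) (p : G) (n : ℕ) : Finset G := by
  classical
  exact (univ.image fun c : S.toFinset → Fin (n + 1) => p + ∑ s, (c s : ℕ) • (s : G)).filter
    fun x => wdist S p x ≤ n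

lemma card_ballFinset_le (p : G) (n : ℕ) : #(ballFinset S p n) ≤ (n + 1) ^ Multiset.card S := by
  classical
  refine (card_filter_le _ _).trans (card_image_le.trans ?_)
  rw [card_univ, Fintype.card_fun, Fintype.card_fin, Fintype.card_coe]
  exact Nat.pow_le_pow_right n.succ_pos (Multiset.toFinset_card_le S)

lemma mem_ballFinset (hS : AddSubmonoid.closure {s : G | s ∈ S} = ⊤) {p x : G} {n : ℕ} :
    x ∈ ballFinset S p n ↔ wdist S p x ≤ n := by
  classical
  unfold ballFinset
  refine ⟨fun hx => (mem_filter.1 hx).2, fun hx => ?_⟩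
  obtain ⟨w, hw, hpx⟩ := exists_word_wdist hS p x
  let c : S.toFinset → Fin (n + 1) := fun s =>
    ⟨#{i | w i = s}, Nat.lt_succ_of_le (((card_filter_le _ _).trans (by simp)).trans hx)⟩
  have hsum : ∑ s, (c s : ℕ) • (s : G) = ∑ i, w i := by
    rw [Finset.sum_coe_sort S.toFinset (fun s => #{i | w i = s} • s),
      ← sum_fiberwise_of_maps_to (g := w) (t := S.toFinset) (fun i _ => by simpa using hw i)]
    refine sum_congr rfl fun s _ => ?_
    rw [← sum_const, ← sum_congr rfl fun i hi => (mem_filter.1 hi).2]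
  exact mem_filter.2 ⟨mem_image.2 ⟨c, mem_univ _, by rw [hsum, hpx]⟩, hx⟩

end WordMetric

section EdgeSum

variable {G : Type} [AddCommGroup G] (S : Multiset G) (T : Finset G)

noncomputable def edgeSum : (G → G → ℝ) →ₗ[ℝ] ℝ where
  toFun F := ∑ x ∈ T, (S.map fun s => F x (x + s)).sum
  map_add' F F' := by simp only [Pi.add_apply, Multiset.sum_map_add, sum_add_distrib]
  map_smul' c F := by simp only [Pi.smul_apply, smul_eq_mul, Multiset.sum_map_mul_left, mul_sum,
    RingHom.id_apply]

variable {S T}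

lemma edgeSum_apply (F : G → G → ℝ) :
    edgeSum S T F = ∑ x ∈ T, (S.map fun s => F x (x + s)).sum := rfl

lemma edgeSum_mono {F F' : G → G → ℝ} (h : ∀ x y, F x y ≤ F' x y) :
    edgeSum S T F ≤ edgeSum S T F' :=
  sum_le_sum fun x _ => Multiset.sum_map_le_sum_map _ _ fun s _ => h x (x + s)

lemma sum_comp_add_right_eq_of_support_subset {f : G → ℝ} {c : G} {D : Finset G}
    (hf : ∀ x ∉ D, f x = 0) (hD : ∀ x ∈ D, x - c ∈ T) : ∑ x ∈ T, f (x + c) = ∑ x ∈ D, f x :=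
  sum_bij_ne_zero (fun x _ _ => x + c) (fun x _ hx => by_contra fun h => hx (hf _ h))
    (fun _ _ _ _ _ _ h => add_right_cancel h)
    (fun y hy _ => ⟨y - c, hD y hy, by simpa using ‹f y ≠ 0›, sub_add_cancel y c⟩)
    fun _ _ _ => rfl

/-- `S = -S` makes `(x, x + s) ↦ (x + s, x)` a bijection of the edges leaving `D`. -/
lemma edgeSum_swap (hsym : S.map (fun s => -s) = S) {D : Finset G} (hDT : D ⊆ T)
    (hDS : ∀ x ∈ D, ∀ s ∈ S, x + s ∈ T) {F : G → G → ℝ} (hF : ∀ x ∉ D, ∀ y, F x y = 0) :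
    edgeSum S T (Function.swap F) = edgeSum S T F := by
  have hD : edgeSum S T F = ∑ x ∈ D, (S.map fun s => F x (x + s)).sum :=
    (sum_subset hDT fun x _ hx => by simp [hF x hx]).symm
  have hshift : ∀ s ∈ S, ∑ x ∈ T, Function.swap F x (x + s) = ∑ y ∈ D, F y (y + -s) :=
    fun s hs => by
      rw [← sum_comp_add_right_eq_of_support_subset (fun y hy => hF y hy _) fun y hy =>
        sub_eq_add_neg y s ▸ hDS y hy (-s) (neg_mem_of_map_neg_eq hsym hs)]
      simp [Function.swap]
  rw [hD, edgeSum_apply, ← Multiset.sum_map_sum, ← Multiset.sum_map_sum,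
    Multiset.map_congr rfl hshift]
  conv_rhs => rw [← hsym, Multiset.map_map]
  simp

lemma two_mul_sum_mul_lap (hsym : S.map (fun s => -s) = S) {D : Finset G} (hDT : D ⊆ T)
    (hDS : ∀ x ∈ D, ∀ s ∈ S, x + s ∈ T) {φ : G → ℝ} (hφ : ∀ x ∉ D, φ x = 0) (u : G → ℝ) :
    2 * ∑ x ∈ T, φ x * lap S u x = -edgeSum S T fun x y => (φ y - φ x) * (u y - u x) := by
  have hlap : ∑ x ∈ T, φ x * lap S u x = edgeSum S T fun x y => φ x * (u y - u x) := by
    simp only [edgeSum_apply, lap, Multiset.sum_map_mul_left]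
  have hswap := edgeSum_swap hsym hDT hDS (F := fun x y => φ x * (u y - u x))
    fun x hx y => by simp [hφ x hx]
  rw [two_mul, hlap]
  nth_rewrite 1 [← hswap]
  rw [← map_add, ← map_neg]
  congr 1
  ext x y
  simp only [Function.swap, Pi.add_apply, Pi.neg_apply]
  ring

lemma sum_gradSq_le_edgeSum {A : Finset G} (hAT : A ⊆ T) {η : G → ℝ}
    (hη : ∀ x ∈ A, ∀ s ∈ S, η (x + s) = 1) (u : G → ℝ) :
    ∑ x ∈ A, gradSq S u x ≤ edgeSum S T fun x y => η y ^ 2 * (u y - u x) ^ 2 := by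
  refine (sum_le_sum_of_subset_of_nonneg hAT fun x _ _ => ?_).trans_eq' ?_
  · exact Multiset.sum_nonneg fun _ h => by
      obtain ⟨s, _, rfl⟩ := Multiset.mem_map.1 h
      positivity
  · refine sum_congr rfl fun x hx => congrArg _ (Multiset.map_congr rfl fun s hs => ?_)
    simp only [hη x hx s hs, one_pow, one_mul]

lemma edgeSum_sq_sub_mul_sq_le {η : G → ℝ} {c : ℝ} (hη : ∀ x, ∀ s ∈ S, |η (x + s) - η x| ≤ c)
    (u : G → ℝ) :
    (edgeSum S T fun x y => (η y - η x) ^ 2 * u x ^ 2) ≤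
      Multiset.card S * c ^ 2 * ∑ x ∈ T, u x ^ 2 := by
  rw [edgeSum_apply, mul_sum]
  refine sum_le_sum fun x _ => (Multiset.sum_map_le_sum_map _ (fun _ => c ^ 2 * u x ^ 2)
    fun s hs => ?_).trans_eq ?_
  · exact mul_le_mul_of_nonneg_right (sq_le_sq' (abs_le.1 (hη x s hs)).1 (abs_le.1 (hη x s hs)).2)
      (sq_nonneg _)
  · rw [Multiset.map_const', Multiset.sum_replicate, nsmul_eq_mul, mul_assoc]

/-- Test the harmonicity of `u` against `η² u` and absorb the cross term by AM-GM. -/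
theorem edgeSum_sq_mul_sq_le (hsym : S.map (fun s => -s) = S) {D : Finset G} (hDT : D ⊆ T)
    (hDS : ∀ x ∈ D, ∀ s ∈ S, x + s ∈ T) {η u : G → ℝ} (hη : ∀ x ∉ D, η x = 0)
    (hu : ∀ x, lap S u x = 0) :
    edgeSum S T (fun x y => η y ^ 2 * (u y - u x) ^ 2) ≤
      4 * edgeSum S T fun x y => (η y - η x) ^ 2 * u x ^ 2 := by
  set P := edgeSum S T (fun x y => η y ^ 2 * (u y - u x) ^ 2) with hP
  set P' := edgeSum S T (fun x y => η x ^ 2 * (u y - u x) ^ 2) with hP'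
  set Q := edgeSum S T (fun x y => (η y ^ 2 - η x ^ 2) * u x * (u y - u x)) with hQ
  set R := edgeSum S T (fun x y => (η y - η x) ^ 2 * u x ^ 2) with hR
  have hPQ : P + Q = 0 := by
    have h := two_mul_sum_mul_lap hsym hDT hDS (φ := fun x => η x ^ 2 * u x)
      (fun x hx => by simp [hη x hx]) u
    simp only [hu, mul_zero, sum_const_zero, zero_eq_neg] at h
    rw [hP, hQ, ← map_add, ← h]
    congr 1
    ext x y
    simp only [Pi.add_apply]
    ring
  have hPP' : P' = P := by
    rw [hP', ← edgeSum_swap hsym hDT hDS fun x hx y => by simp [hη x hx], hP]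
    congr 1
    ext x y
    simp only [Function.swap]
    ring
  have hamgm : -Q ≤ 4⁻¹ * P + 4⁻¹ * P' + 2 * R := by
    rw [hP, hP', hQ, hR, ← map_neg, ← smul_eq_mul, ← smul_eq_mul, ← smul_eq_mul, ← map_smul,
      ← map_smul, ← map_smul, ← map_add, ← map_add]
    refine edgeSum_mono fun x y => ?_
    simp only [Pi.neg_apply, Pi.add_apply, Pi.smul_apply, smul_eq_mul]
    nlinarith [sq_nonneg ((η y + η x) * (u y - u x) + 4 * (η y - η x) * u x),
      sq_nonneg ((η y - η x) * (u y - u x))]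
  linarith

end EdgeSum

section Caccioppoli

variable {G : Type} [AddCommGroup G] {S : Multiset G}

lemma lap_fwdDiff (u : G → ℝ) (g x : G) : lap S (Δ_[g] u) x = lap S u (x + g) - lap S u x := by
  simp only [lap, fwdDiff, ← Multiset.sum_map_sub]
  refine congrArg _ (Multiset.map_congr rfl fun s _ => ?_)
  rw [add_right_comm]
  ring

lemma growth_const_nonneg {u : G → ℝ} {C d : ℝ} {p : G}
    (hu : ∀ x, |u x| ≤ C * ((wdist S p x : ℝ) + 1) ^ d) : 0 ≤ C := by
  simpa using (abs_nonneg _).trans (hu p)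

lemma ballFinset_mono (hS : AddSubmonoid.closure {s : G | s ∈ S} = ⊤) (p : G) {m n : ℕ}
    (hmn : m ≤ n) : ballFinset S p m ⊆ ballFinset S p n :=
  fun _ hx => (mem_ballFinset hS).2 (((mem_ballFinset hS).1 hx).trans hmn)

theorem caccioppoli (hS : AddSubmonoid.closure {s : G | s ∈ S} = ⊤)
    (hsym : S.map (fun s => -s) = S) {u : G → ℝ} (hu : ∀ x, lap S u x = 0)
    (p : G) {n : ℕ} (hn : 1 ≤ n) :
    ∑ x ∈ ballFinset S p n, gradSq S u x ≤
      4 * Multiset.card S / n ^ 2 * ∑ x ∈ ballFinset S p (2 * n + 1), u x ^ 2 := by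
  have hn' : (0 : ℝ) < n := by exact_mod_cast hn
  set η : G → ℝ := fun x => Set.projIcc (0 : ℝ) 1 zero_le_one ((2 * n + 1 - wdist S p x) / n)
  have hη_zero : ∀ x ∉ ballFinset S p (2 * n), η x = 0 := fun x hx => by
    rw [mem_ballFinset hS, not_le, ← Nat.succ_le_iff] at hx
    have hx' : (2 * n + 1 : ℝ) ≤ wdist S p x := by exact_mod_cast hx
    have : (2 * n + 1 - wdist S p x : ℝ) / n ≤ 0 :=
      div_nonpos_of_nonpos_of_nonneg (by linarith) hn'.le
    simp [η, Set.projIcc_of_le_left _ this]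
  have hη_one : ∀ x ∈ ballFinset S p n, ∀ s ∈ S, η (x + s) = 1 := fun x hx s hs => by
    rw [mem_ballFinset hS] at hx
    have hxs : (wdist S p (x + s) : ℝ) ≤ n + 1 := by
      exact_mod_cast (wdist_add_le hS hs p x).trans (by omega)
    have : 1 ≤ (2 * n + 1 - wdist S p (x + s) : ℝ) / n := by
      rw [le_div_iff₀ hn']
      linarith
    simp [η, Set.projIcc_of_right_le _ this]
  have hη_lip : ∀ x, ∀ s ∈ S, |η (x + s) - η x| ≤ 1 / n := fun x s hs => by
    refine (Set.abs_projIcc_sub_projIcc _).trans ?_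
    rw [← sub_div, abs_div, abs_of_pos hn', sub_sub_sub_cancel_left, abs_sub_comm]
    exact div_le_div_of_nonneg_right (abs_wdist_add_sub_le hS hsym hs p x) hn'.le
  have hDS : ∀ x ∈ ballFinset S p (2 * n), ∀ s ∈ S, x + s ∈ ballFinset S p (2 * n + 1) :=
    fun x hx s hs => (mem_ballFinset hS).2
      ((wdist_add_le hS hs p x).trans (Nat.succ_le_succ ((mem_ballFinset hS).1 hx)))
  calc ∑ x ∈ ballFinset S p n, gradSq S u x
      ≤ edgeSum S (ballFinset S p (2 * n + 1)) fun x y => η y ^ 2 * (u y - u x) ^ 2 :=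
        sum_gradSq_le_edgeSum (ballFinset_mono hS p (by omega)) hη_one u
    _ ≤ 4 * edgeSum S (ballFinset S p (2 * n + 1)) fun x y => (η y - η x) ^ 2 * u x ^ 2 :=
        edgeSum_sq_mul_sq_le hsym (ballFinset_mono hS p (by omega)) hDS hη_zero hu
    _ ≤ 4 * (Multiset.card S * (1 / n) ^ 2 * ∑ x ∈ ballFinset S p (2 * n + 1), u x ^ 2) :=
        mul_le_mul_of_nonneg_left (edgeSum_sq_sub_mul_sq_le hη_lip u) zero_le_four
    _ = 4 * Multiset.card S / n ^ 2 * ∑ x ∈ ballFinset S p (2 * n + 1), u x ^ 2 := by ring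

end Caccioppoli

section Iteration

open Filter Topology

variable {G : Type} [AddCommGroup G] {S : Multiset G}

lemma sum_sq_fwdDiff_le (hS : AddSubmonoid.closure {s : G | s ∈ S} = ⊤)
    (hsym : S.map (fun s => -s) = S) {u : G → ℝ} (hu : ∀ x, lap S u x = 0) {p : G} {A e : ℝ}
    (hbound : ∀ n : ℕ, 1 ≤ n → ∑ x ∈ ballFinset S p n, u x ^ 2 ≤ A * (n + 1) ^ e)
    {s : G} (hs : s ∈ S) {n : ℕ} (hn : 1 ≤ n) :
    ∑ x ∈ ballFinset S p n, Δ_[s] u x ^ 2 ≤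
      16 * Multiset.card S * 2 ^ e * A * (n + 1) ^ (e - 2) := by
  have hn' : (1 : ℝ) ≤ n := by exact_mod_cast hn
  have hgrad : ∑ x ∈ ballFinset S p n, Δ_[s] u x ^ 2 ≤ ∑ x ∈ ballFinset S p n, gradSq S u x :=
    sum_le_sum fun x _ => Multiset.single_le_sum
      (fun _ h => by obtain ⟨t, _, rfl⟩ := Multiset.mem_map.1 h; positivity) _
      (Multiset.mem_map_of_mem (fun t => (u (x + t) - u x) ^ 2) hs)
  have hdouble : ∑ x ∈ ballFinset S p (2 * n + 1), u x ^ 2 ≤ 2 ^ e * A * (n + 1) ^ e := by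
    have h := hbound (2 * n + 1) (by omega)
    rwa [show ((2 * n + 1 : ℕ) : ℝ) + 1 = 2 * (n + 1) by push_cast; ring,
      Real.mul_rpow zero_le_two (by positivity), mul_left_comm, ← mul_assoc] at h
  have hcoef : 4 * (Multiset.card S : ℝ) / n ^ 2 ≤ 16 * Multiset.card S / (n + 1) ^ 2 := by
    rw [div_le_div_iff₀ (by positivity) (by positivity)]
    have : (n + 1 : ℝ) ^ 2 ≤ 4 * n ^ 2 := by nlinarith
    nlinarith [(Multiset.card S).cast_nonneg (α := ℝ)]
  calc ∑ x ∈ ballFinset S p n, Δ_[s] u x ^ 2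
      ≤ 4 * Multiset.card S / n ^ 2 * ∑ x ∈ ballFinset S p (2 * n + 1), u x ^ 2 :=
        hgrad.trans (caccioppoli hS hsym hu p hn)
    _ ≤ 16 * Multiset.card S / (n + 1) ^ 2 * (2 ^ e * A * (n + 1) ^ e) :=
        mul_le_mul hcoef hdouble (sum_nonneg fun _ _ => sq_nonneg _) (by positivity)
    _ = 16 * Multiset.card S * 2 ^ e * A * (n + 1) ^ (e - 2) := by
        rw [Real.rpow_sub (by positivity), Real.rpow_two]
        field_simp

lemma eq_zero_of_sum_sq_le (hS : AddSubmonoid.closure {s : G | s ∈ S} = ⊤) {u : G → ℝ} {p : G}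
    {A e : ℝ} (he : e < 0)
    (hbound : ∀ n : ℕ, 1 ≤ n → ∑ x ∈ ballFinset S p n, u x ^ 2 ≤ A * (n + 1) ^ e) : u = 0 := by
  ext x
  have hlim : Tendsto (fun n : ℕ => A * ((n : ℝ) + 1) ^ e) atTop (𝓝 0) := by
    have h := (tendsto_rpow_neg_atTop (neg_pos.2 he)).comp
      (tendsto_atTop_add_const_right _ 1 tendsto_natCast_atTop_atTop)
    simpa using h.const_mul A
  have hx : u x ^ 2 ≤ 0 := ge_of_tendsto hlim <| eventually_atTop.2 ⟨max 1 (wdist S p x),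
    fun n hn => (single_le_sum (fun y _ => sq_nonneg (u y))
      ((mem_ballFinset hS).2 (le_of_max_le_right hn))).trans (hbound n (le_of_max_le_left hn))⟩
  simpa using le_antisymm hx (sq_nonneg _)

/-- Each difference along `S` lowers the growth exponent by `2` (Caccioppoli), and a negative
exponent forces the function to vanish. -/
theorem diffsVanish_of_sum_sq_le (hS : AddSubmonoid.closure {s : G | s ∈ S} = ⊤)
    (hsym : S.map (fun s => -s) = S) (p : G) (k : ℕ) :
    ∀ {u : G → ℝ} {A e : ℝ}, (∀ x, lap S u x = 0) →
      (∀ n : ℕ, 1 ≤ n → ∑ x ∈ ballFinset S p n, u x ^ 2 ≤ A * (n + 1) ^ e) → e < 2 * k →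
        DiffsVanish {s | s ∈ S} k u := by
  induction k with
  | zero => exact fun _ hbound he => eq_zero_of_sum_sq_le hS (by simpa using he) hbound
  | succ k ih =>
    intro u A e hu hbound he s hs
    refine ih (fun x => by simp [lap_fwdDiff, hu])
      (fun n hn => sum_sq_fwdDiff_le hS hsym hu hbound hs hn) (by push_cast at he; linarith)

lemma sum_sq_le_of_abs_le (hS : AddSubmonoid.closure {s : G | s ∈ S} = ⊤) {u : G → ℝ} {p : G}
    {C d : ℝ} (hd : 0 ≤ d) (hu : ∀ x, |u x| ≤ C * ((wdist S p x : ℝ) + 1) ^ d) (n : ℕ) :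
    ∑ x ∈ ballFinset S p n, u x ^ 2 ≤ C ^ 2 * (n + 1) ^ (Multiset.card S + 2 * d) := by
  have hC := growth_const_nonneg hu
  have hpt : ∀ x ∈ ballFinset S p n, u x ^ 2 ≤ (C * (n + 1) ^ d) ^ 2 := fun x hx => by
    have hx' : (wdist S p x : ℝ) ≤ n := by exact_mod_cast (mem_ballFinset hS).1 hx
    refine sq_le_sq' (abs_le.1 ?_).1 (abs_le.1 ?_).2 <;>
    exact (hu x).trans (mul_le_mul_of_nonneg_left
      (Real.rpow_le_rpow (by positivity) (by linarith) hd) hC)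
  have hcard : (#(ballFinset S p n) : ℝ) ≤ (n + 1) ^ Multiset.card S := by
    exact_mod_cast card_ballFinset_le p n
  calc ∑ x ∈ ballFinset S p n, u x ^ 2
      ≤ #(ballFinset S p n) * (C * (n + 1) ^ d) ^ 2 := by
        simpa using sum_le_card_nsmul _ _ _ hpt
    _ ≤ (n + 1) ^ Multiset.card S * (C * (n + 1) ^ d) ^ 2 :=
        mul_le_mul_of_nonneg_right hcard (sq_nonneg _)
    _ = C ^ 2 * (n + 1) ^ (Multiset.card S + 2 * d) := by
        rw [Real.rpow_add (by positivity), Real.rpow_natCast, two_mul,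
          Real.rpow_add (by positivity)]
        ring

theorem exists_iterate_fwdDiff_eq_zero (hsym : S.map (fun s => -s) = S)
    (hgen : AddSubgroup.closure {s : G | s ∈ S} = ⊤) {p : G} {d : ℝ} (hd : 0 ≤ d) {f : G → ℝ}
    (hf : f ∈ HdSet S p d) : ∃ k : ℕ, ∀ g, Δ_[g] ^[k] f = 0 := by
  obtain ⟨hharm, C, hC⟩ := hf
  have hS := addSubmonoid_closure_eq_top hsym hgen
  obtain ⟨k, hk⟩ := exists_nat_gt (Multiset.card S + 2 * d)
  have hvanish := diffsVanish_of_sum_sq_le hS hsym p k hharm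
    (fun n _ => sum_sq_le_of_abs_le hS hd hC n) (by linarith [k.cast_nonneg (α := ℝ)])
  exact ⟨k, fun g => hvanish.iterate_fwdDiff_eq_zero (hgen ▸ AddSubgroup.mem_top g)⟩

end Iteration

section Pullback

variable {G H : Type} [AddCommGroup G] [AddCommGroup H] {S : Multiset G}

lemma lap_comp_addMonoidHom (φ : G →+ H) (U : H → ℝ) (x : G) :
    lap S (U ∘ φ) x = lap (S.map φ) U (φ x) := by
  simp [lap, Multiset.map_map]

theorem comp_mem_HdSet_iff (hS : AddSubmonoid.closure {s : G | s ∈ S} = ⊤) (φ : G →+ H)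
    (hφ : Function.Surjective φ) {p : G} {d : ℝ} (hd : 0 ≤ d) {U : H → ℝ} :
    U ∘ φ ∈ HdSet S p d ↔ U ∈ HdSet (S.map φ) (φ p) d := by
  have hmono : ∀ {C : ℝ} {a b : ℕ}, 0 ≤ C → a ≤ b → C * ((a : ℝ) + 1) ^ d ≤ C * ((b : ℝ) + 1) ^ d :=
    fun hC hab => mul_le_mul_of_nonneg_left
      (Real.rpow_le_rpow (by positivity) (by exact_mod_cast Nat.add_le_add_right hab 1) hd) hC
  constructor
  · rintro ⟨hharm, C, hC⟩
    refine ⟨hφ.forall.2 fun x => (lap_comp_addMonoidHom φ U x).symm.trans (hharm x), C,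
      fun y => ?_⟩
    obtain ⟨x, rfl, hx⟩ := exists_wdist_le_of_map hS φ hφ p y
    exact (hC x).trans (hmono (growth_const_nonneg hC) hx)
  · rintro ⟨hharm, C, hC⟩
    refine ⟨fun x => (lap_comp_addMonoidHom φ U x).trans (hharm (φ x)), C, fun x => ?_⟩
    exact (hC (φ x)).trans (hmono (growth_const_nonneg hC) (wdist_map_le hS φ p x))

end Pullback

/-- **Generalized Heilbronn theorem** (Theorem 1.2). Every `f ∈ H^d(G,S)` is constant on the
torsion part `G₂`, its restriction to `G₁ ≅ ℤ^m` is the restriction of a polynomial on `ℝ^m`,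
and the restriction map is an identification `H^d(G,S) = H^d(G₁, π_{G₁}S)`. -/
theorem generalized_heilbronn (m l : ℕ) (q : Fin l → ℕ) (hq : ∀ i, IsPrimePow (q i))
    (S : Multiset (AbG m l q))
    (hsym : S.map (fun s => -s) = S)
    (hgen : AddSubgroup.closure {s : AbG m l q | s ∈ S} = ⊤)
    (p : AbG m l q) (d : ℝ) (hd : 0 ≤ d) :
    (∀ f ∈ HdSet S p d, ∀ (x : AbG m l q) (w : ∀ i : Fin l, ZMod (q i)),
        f (x + ((0 : Fin m → ℤ), w)) = f x) ∧
    (∀ f ∈ HdSet S p d, ∃ P : MvPolynomial (Fin m) ℝ,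
        ∀ x₁ : Fin m → ℤ, f (x₁, 0) = MvPolynomial.eval (fun i => (x₁ i : ℝ)) P) ∧
    Set.BijOn (fun (f : AbG m l q → ℝ) => (fun x₁ : Fin m → ℤ => f (x₁, 0)))
      (HdSet S p d) (HdSet (S.map Prod.fst) p.1 d) := by
  have : ∀ i, NeZero (q i) := fun i => ⟨(hq i).pos.ne'⟩
  have hS := addSubmonoid_closure_eq_top hsym hgen
  have hrestrict : ∀ U, U ∘ Prod.fst ∈ HdSet S p d ↔ U ∈ HdSet (S.map Prod.fst) p.1 d := fun U =>
    comp_mem_HdSet_iff hS (AddMonoidHom.fst _ _) Prod.fst_surjective hd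
  have hinv : ∀ f ∈ HdSet S p d, ∀ (x : AbG m l q) (w : ∀ i : Fin l, ZMod (q i)),
      f (x + ((0 : Fin m → ℤ), w)) = f x := fun f hf x w => by
    obtain ⟨k, hk⟩ := exists_iterate_fwdDiff_eq_zero hsym hgen hd hf
    have hw : IsOfFinAddOrder ((0 : Fin m → ℤ), w) :=
      (IsOfFinAddOrder.zero).prod_mk (isOfFinAddOrder_of_finite w)
    exact sub_eq_zero.1 (congrFun (fwdDiff_eq_zero_of_iterate_eq_zero hw (hk _)) x)
  have hfactor : ∀ f ∈ HdSet S p d, (fun x₁ => f (x₁, 0)) ∘ Prod.fst = f := fun f hf =>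
    funext fun x => by simpa using (hinv f hf (x.1, 0) x.2).symm
  refine ⟨hinv, fun f hf => ?_, fun f hf => ?_, fun f hf g hg hfg => ?_, fun U hU => ?_⟩
  · obtain ⟨k, hk⟩ := exists_iterate_fwdDiff_eq_zero hsym hgen hd hf
    refine mem_polyFunctions.1 (mem_polyFunctions_of_fwdDiff_iter (K := k) fun j => ?_)
    exact (fwdDiff_iter_comp_addMonoidHom (AddMonoidHom.inl _ _) (Pi.single j 1) k f).trans
      (by rw [hk])
  · exact (hrestrict _).1 ((hfactor f hf).symm ▸ hf)
  · rw [← hfactor f hf, ← hfactor g hg]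
    exact congrArg (· ∘ Prod.fst) hfg
  · exact ⟨U ∘ Prod.fst, (hrestrict U).2 hU, rfl⟩
end

section
/- Let (G,S) be the Cayley graph of a finitely generated abelian group G ≅ ℤ^m ⊕ ⊕_{i=1}^l ℤ_{q_i}. Then there exists a constant C = C(m,S) such that for every p ∈ G, every R > 0, and every function f : B_{3R}(p) ∪ ∂B_{3R}(p) → ℝ, one has Σ_{x ∈ B_R(p)} (f(x) − f_{B_R})² ≤ C R² Σ_{x,y ∈ B_{3R}(p), x ~ y} (f(x) − f(y))², where f_{B_R} = (1/|B_R(p)|) Σ_{x ∈ B_R(p)} f(x). -/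
open MvPolynomial

/-!
Join `x` to `x + d` by a geodesic word for `d`; telescoping and Cauchy–Schwarz bound
`(f (x + d) - f x)²` by `|d|` times the sum of the squared increments along the path. The `i`-th
step of that path is the translate by `x` of a fixed edge, so as `x` runs over `B_R(p)` it meets
each edge of `B_{3R}(p)` at most once; summing over `d ∈ B_{2R}(0)` and `i < |d| ≤ 2R` bounds the
variance on `B_R(p)` by `4R² |B_{2R}| / |B_R|` times the energy on `B_{3R}(p)`, in any Cayley graph
of an abelian group. In `ℤ^m × T` with `T` finite, the `ℤ^m`-coordinates grow at most linearly
along words while the standard basis vectors have bounded length, so `|B_R|` is comparable to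
`R^m` from above and below, and the ratio `|B_{2R}| / |B_R|` is bounded.
-/

namespace Finset

theorem sum_sq_sub_average_le {α : Type*} (B : Finset α) (f : α → ℝ) :
    ∑ x ∈ B, (f x - (∑ y ∈ B, f y) / #B) ^ 2 ≤ (∑ x ∈ B, ∑ y ∈ B, (f x - f y) ^ 2) / #B := by
  rcases B.eq_empty_or_nonempty with rfl | hB
  · simp
  have hcard : (0 : ℝ) < #B := by exact_mod_cast hB.card_pos
  rw [le_div_iff₀ hcard, sum_mul]
  refine sum_le_sum fun x _ => ?_
  have hx : f x - (∑ y ∈ B, f y) / #B = (∑ y ∈ B, (f x - f y)) / #B := by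
    rw [sum_sub_distrib, sum_const, nsmul_eq_mul]
    field_simp
  calc (f x - (∑ y ∈ B, f y) / #B) ^ 2 * #B = (∑ y ∈ B, (f x - f y)) ^ 2 / #B := by
        rw [hx]; field_simp
    _ ≤ ∑ y ∈ B, (f x - f y) ^ 2 := by
        rw [div_le_iff₀ hcard, mul_comm]
        exact sq_sum_le_card_mul_sum_sq

theorem sq_sub_le_mul_sum_range_sq_sub (g : ℕ → ℝ) (k : ℕ) :
    (g k - g 0) ^ 2 ≤ k * ∑ i ∈ range k, (g (i + 1) - g i) ^ 2 := by
  rw [← sum_range_sub]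
  simpa using sq_sum_le_card_mul_sum_sq (s := range k) (f := fun i => g (i + 1) - g i)

end Finset

namespace CayleyGraph

open Finset

section

variable {G : Type} [AddCommGroup G] {S : Multiset G}

theorem exists_fin_word_iff {x y : G} {k : ℕ} :
    (∃ w : Fin k → G, (∀ i, w i ∈ S) ∧ x + ∑ i, w i = y) ↔
      ∃ w : ℕ → G, (∀ i < k, w i ∈ S) ∧ x + ∑ i ∈ range k, w i = y := by
  constructor
  · rintro ⟨w, hwS, hw⟩
    refine ⟨fun i => if h : i < k then w ⟨i, h⟩ else 0, fun i hi => by simpa [hi] using hwS _, ?_⟩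
    rw [← hw, ← Fin.sum_univ_eq_sum_range]
    simp
  · rintro ⟨w, hwS, hw⟩
    exact ⟨fun i => w i, fun i => hwS i i.isLt, by rwa [Fin.sum_univ_eq_sum_range (fun i => w i)]⟩

theorem wdist_le_of_sum_range_eq {x y : G} {k : ℕ} {w : ℕ → G} (hwS : ∀ i < k, w i ∈ S)
    (hw : x + ∑ i ∈ range k, w i = y) : wdist S x y ≤ k :=
  Nat.sInf_le (exists_fin_word_iff.2 ⟨w, hwS, hw⟩)

theorem neg_mem_of_mem (hsym : S.map (fun s => -s) = S) {s : G} (hs : s ∈ S) : -s ∈ S :=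
  hsym ▸ Multiset.mem_map_of_mem _ hs

theorem addSubmonoid_closure_eq_top (hsym : S.map (fun s => -s) = S)
    (hgen : AddSubgroup.closure {s : G | s ∈ S} = ⊤) :
    AddSubmonoid.closure {s : G | s ∈ S} = ⊤ := by
  have hneg : -{s : G | s ∈ S} = {s : G | s ∈ S} :=
    Set.ext fun s => ⟨fun h => by simpa using neg_mem_of_mem hsym h, neg_mem_of_mem hsym⟩
  have := AddSubgroup.closure_toAddSubmonoid {s : G | s ∈ S}
  rw [hneg, Set.union_self, hgen] at this
  exact this ▸ rfl

theorem exists_geodesic (hS : AddSubmonoid.closure {s : G | s ∈ S} = ⊤) (x y : G) :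
    ∃ w : ℕ → G, (∀ i < wdist S x y, w i ∈ S) ∧ x + ∑ i ∈ range (wdist S x y), w i = y := by
  obtain ⟨L, hLS, hL⟩ := AddSubmonoid.exists_list_of_mem_closure (hS ▸ AddSubmonoid.mem_top (y - x))
  have hne : {k | ∃ w : Fin k → G, (∀ i, w i ∈ S) ∧ x + ∑ i, w i = y}.Nonempty := by
    refine ⟨L.length, L.get, fun i => hLS _ (L.get_mem i), ?_⟩
    rw [← List.sum_ofFn, List.ofFn_get, hL, add_sub_cancel]
  exact exists_fin_word_iff.1 (Nat.sInf_mem hne)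

theorem wdist_self (x : G) : wdist S x x = 0 :=
  Nat.le_zero.1 (wdist_le_of_sum_range_eq (w := 0) (by simp) (by simp))

theorem wdist_eq_wdist_zero_sub (x y : G) : wdist S x y = wdist S 0 (y - x) := by
  simp only [wdist, zero_add, eq_sub_iff_add_eq, add_comm x]

theorem wdist_zero_add_le (hS : AddSubmonoid.closure {s : G | s ∈ S} = ⊤) (g h : G) :
    wdist S 0 (g + h) ≤ wdist S 0 g + wdist S 0 h := by
  obtain ⟨u, huS, hu⟩ := exists_geodesic hS 0 g
  obtain ⟨v, hvS, hv⟩ := exists_geodesic hS 0 h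
  set a := wdist S 0 g
  refine wdist_le_of_sum_range_eq (w := fun i => if i < a then u i else v (i - a)) ?_ ?_
  · intro i hi
    split_ifs with hia
    · exact huS i hia
    · exact hvS _ (by omega)
  · rw [zero_add] at hu hv
    rw [zero_add, sum_range_add]
    conv_rhs => rw [← hu, ← hv]
    congr 1
    · exact sum_congr rfl fun i hi => if_pos (mem_range.1 hi)
    · simp

theorem wdist_zero_sum_le (hS : AddSubmonoid.closure {s : G | s ∈ S} = ⊤) {ι : Type*}
    (t : Finset ι) (g : ι → G) : wdist S 0 (∑ i ∈ t, g i) ≤ ∑ i ∈ t, wdist S 0 (g i) :=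
  le_sum_of_subadditive _ (wdist_self 0).le (wdist_zero_add_le hS) t g

theorem wdist_zero_neg_le (hsym : S.map (fun s => -s) = S)
    (hS : AddSubmonoid.closure {s : G | s ∈ S} = ⊤) (g : G) :
    wdist S 0 (-g) ≤ wdist S 0 g := by
  obtain ⟨w, hwS, hw⟩ := exists_geodesic hS 0 g
  refine wdist_le_of_sum_range_eq (w := fun i => -w i)
    (fun i hi => neg_mem_of_mem hsym (hwS i hi)) ?_
  rw [sum_neg_distrib]
  conv_rhs => rw [← hw]
  simp

theorem wdist_triangle (hS : AddSubmonoid.closure {s : G | s ∈ S} = ⊤) (x y z : G) :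
    wdist S x z ≤ wdist S x y + wdist S y z := by
  simpa [wdist_eq_wdist_zero_sub x, wdist_eq_wdist_zero_sub y] using
    wdist_zero_add_le hS (y - x) (z - y)

theorem wdist_comm (hsym : S.map (fun s => -s) = S)
    (hS : AddSubmonoid.closure {s : G | s ∈ S} = ⊤) (x y : G) :
    wdist S x y = wdist S y x := by
  rw [wdist_eq_wdist_zero_sub x, wdist_eq_wdist_zero_sub y]
  refine le_antisymm ?_ ?_
  · simpa using wdist_zero_neg_le hsym hS (x - y)
  · simpa using wdist_zero_neg_le hsym hS (y - x)

theorem add_mem_ball (hS : AddSubmonoid.closure {s : G | s ∈ S} = ⊤) {p x c : G} {R r : ℝ}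
    (hx : x ∈ ball S p R) (hc : c ∈ ball S 0 r) : x + c ∈ ball S p (R + r) := by
  have h : wdist S p (x + c) ≤ wdist S p x + wdist S 0 c := by
    simpa [wdist_eq_wdist_zero_sub x] using wdist_triangle hS p x (x + c)
  have hx' : (wdist S p x : ℝ) ≤ R := hx
  have hc' : (wdist S 0 c : ℝ) ≤ r := hc
  show (wdist S p (x + c) : ℝ) ≤ R + r
  exact (Nat.cast_le.2 h).trans (by push_cast; linarith)

theorem sub_mem_ball_zero (hsym : S.map (fun s => -s) = S)
    (hS : AddSubmonoid.closure {s : G | s ∈ S} = ⊤) {p x y : G} {R r : ℝ}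
    (hx : x ∈ ball S p R) (hy : y ∈ ball S p r) : y - x ∈ ball S 0 (R + r) := by
  have h : wdist S 0 (y - x) ≤ wdist S p x + wdist S p y := by
    rw [← wdist_eq_wdist_zero_sub, wdist_comm hsym hS p x]
    exact wdist_triangle hS x p y
  have hx' : (wdist S p x : ℝ) ≤ R := hx
  have hy' : (wdist S p y : ℝ) ≤ r := hy
  show (wdist S 0 (y - x) : ℝ) ≤ R + r
  exact (Nat.cast_le.2 h).trans (by push_cast; linarith)

theorem finite_setOf_wdist_le (hS : AddSubmonoid.closure {s : G | s ∈ S} = ⊤) (p : G) (n : ℕ) :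
    {y | wdist S p y ≤ n}.Finite := by
  classical
  induction n with
  | zero =>
    refine (Set.finite_singleton p).subset fun y hy => ?_
    obtain ⟨w, -, hw⟩ := exists_geodesic hS p y
    simp_all
  | succ n ih =>
    refine (ih.union (S.toFinset.finite_toSet.biUnion fun s _ => ih.image (· + s))).subset ?_
    intro y (hy : wdist S p y ≤ n + 1)
    obtain ⟨w, hwS, hw⟩ := exists_geodesic hS p y
    rcases h : wdist S p y with _ | j
    · left
      simp [h]
    · right
      refine Set.mem_biUnion (Multiset.mem_toFinset.2 (hwS j (by omega)))
        ⟨p + ∑ i ∈ range j, w i, ?_, ?_⟩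
      · exact (wdist_le_of_sum_range_eq (fun i hi => hwS i (by omega)) rfl).trans (by omega)
      · rw [← hw, h, sum_range_succ, ← add_assoc]

theorem ball_finite (hS : AddSubmonoid.closure {s : G | s ∈ S} = ⊤) (p : G) (R : ℝ) :
    (ball S p R).Finite :=
  (finite_setOf_wdist_le hS p ⌊R⌋₊).subset fun _ hy => Nat.le_floor hy

/-- The paper's `Σ_{x,y ∈ A, x ~ y} (f x - f y)²`, ordered pairs counted with multiplicity. -/
noncomputable def dirichletEnergy (S : Multiset G) (A : Set G) (f : G → ℝ) : ℝ :=
  ∑ᶠ x ∈ A, (S.map fun s => A.indicator (fun y => (f y - f x) ^ 2) (x + s)).sum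

theorem dirichletEnergy_nonneg (A : Set G) (f : G → ℝ) : 0 ≤ dirichletEnergy S A f :=
  finsum_nonneg fun _ => finsum_nonneg fun _ => Multiset.sum_nonneg fun _ ha => by
    obtain ⟨s, -, rfl⟩ := Multiset.mem_map.1 ha
    exact Set.indicator_nonneg (fun _ _ => sq_nonneg _) _

theorem sum_indicator_le_dirichletEnergy {A : Set G} (hA : A.Finite) (f : G → ℝ) {B : Finset G}
    {c s : G} (hs : s ∈ S) (hB : ∀ x ∈ B, x + c ∈ A) :
    ∑ x ∈ B, A.indicator (fun y => (f y - f (x + c)) ^ 2) (x + c + s) ≤ dirichletEnergy S A f := by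
  classical
  rw [dirichletEnergy, finsum_mem_eq_finite_toFinset_sum _ hA,
    ← sum_image (f := fun z => A.indicator (fun y => (f y - f z) ^ 2) (z + s)) (g := (· + c))
      fun _ _ _ _ => add_right_cancel]
  refine sum_le_sum_of_subset_of_nonneg ?_ (fun _ _ _ => ?_) |>.trans (sum_le_sum fun z _ => ?_)
  · intro z hz
    obtain ⟨x, hx, rfl⟩ := mem_image.1 hz
    exact hA.mem_toFinset.2 (hB x hx)
  · exact Set.indicator_nonneg (fun _ _ => sq_nonneg _) _
  · refine Multiset.single_le_sum (fun _ ha => ?_) _ (Multiset.mem_map_of_mem _ hs)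
    obtain ⟨s, -, rfl⟩ := Multiset.mem_map.1 ha
    exact Set.indicator_nonneg (fun _ _ => sq_nonneg _) _

theorem sq_sub_le_mul_sum_indicator {A : Set G} (f : G → ℝ) (x : G) (w : ℕ → G) (k : ℕ)
    (hA : ∀ i < k, x + ∑ j ∈ range (i + 1), w j ∈ A) :
    (f (x + ∑ i ∈ range k, w i) - f x) ^ 2 ≤
      k * ∑ i ∈ range k,
        A.indicator (fun y => (f y - f (x + ∑ j ∈ range i, w j)) ^ 2)
          (x + ∑ j ∈ range i, w j + w i) := by
  have := sq_sub_le_mul_sum_range_sq_sub (fun i => f (x + ∑ j ∈ range i, w j)) k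
  simp only [sum_range_zero, add_zero] at this
  refine this.trans_eq (congrArg _ (sum_congr rfl fun i hi => ?_))
  rw [add_assoc, ← sum_range_succ, Set.indicator_of_mem (hA i (mem_range.1 hi))]

theorem sum_sq_sub_add_le (hS : AddSubmonoid.closure {s : G | s ∈ S} = ⊤) {p d : G} {R r : ℝ}
    (f : G → ℝ) {B : Finset G} (hB : ∀ x ∈ B, x ∈ ball S p R) (hd : d ∈ ball S 0 r) :
    ∑ x ∈ B, (f (x + d) - f x) ^ 2 ≤ r ^ 2 * dirichletEnergy S (ball S p (R + r)) f := by
  obtain ⟨w, hwS, hw⟩ := exists_geodesic hS 0 d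
  rw [zero_add] at hw
  set k := wdist S 0 d
  have hk : (k : ℝ) ≤ r := hd
  set A := ball S p (R + r)
  have hA : ∀ x ∈ B, ∀ i ≤ k, x + ∑ j ∈ range i, w j ∈ A := by
    intro x hx i hi
    have hpath : wdist S 0 (∑ j ∈ range i, w j) ≤ k :=
      (wdist_le_of_sum_range_eq (fun j hj => hwS j (by omega)) (zero_add _)).trans hi
    exact add_mem_ball hS (hB x hx) (show (_ : ℝ) ≤ r from (Nat.cast_le.2 hpath).trans hk)
  calc ∑ x ∈ B, (f (x + d) - f x) ^ 2
      ≤ ∑ x ∈ B, k * ∑ i ∈ range k,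
          A.indicator (fun y => (f y - f (x + ∑ j ∈ range i, w j)) ^ 2)
            (x + ∑ j ∈ range i, w j + w i) := by
        refine sum_le_sum fun x hx => ?_
        have := sq_sub_le_mul_sum_indicator f x w k fun i hi => hA x hx (i + 1) hi
        rwa [hw] at this
    _ = k * ∑ i ∈ range k, ∑ x ∈ B,
          A.indicator (fun y => (f y - f (x + ∑ j ∈ range i, w j)) ^ 2)
            (x + ∑ j ∈ range i, w j + w i) := by
        rw [← mul_sum, sum_comm]
    _ ≤ k * ∑ i ∈ range k, dirichletEnergy S A f := by
        gcongr with i hi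
        exact sum_indicator_le_dirichletEnergy (ball_finite hS p _) f (hwS i (mem_range.1 hi))
          fun x hx => hA x hx i (mem_range.1 hi).le
    _ = k ^ 2 * dirichletEnergy S A f := by
        rw [sum_const, card_range, nsmul_eq_mul]
        ring
    _ ≤ r ^ 2 * dirichletEnergy S A f := by
        gcongr
        exact dirichletEnergy_nonneg A f

theorem sum_sum_sq_sub_le (hS : AddSubmonoid.closure {s : G | s ∈ S} = ⊤) {p : G} {R r : ℝ}
    (f : G → ℝ) {B D : Finset G} (hB : ∀ x ∈ B, x ∈ ball S p R) (hD : ∀ d ∈ D, d ∈ ball S 0 r) :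
    ∑ x ∈ B, ∑ d ∈ D, (f (x + d) - f x) ^ 2 ≤
      r ^ 2 * #D * dirichletEnergy S (ball S p (R + r)) f := by
  rw [sum_comm]
  calc _ ≤ ∑ _d ∈ D, r ^ 2 * dirichletEnergy S (ball S p (R + r)) f :=
        sum_le_sum fun d hd => sum_sq_sub_add_le hS f hB (hD d hd)
    _ = _ := by
        rw [sum_const, nsmul_eq_mul]
        ring

theorem poincare_of_card_ball_le (hsym : S.map (fun s => -s) = S)
    (hS : AddSubmonoid.closure {s : G | s ∈ S} = ⊤) (p : G) {R D : ℝ} (hR : 0 ≤ R) (f : G → ℝ)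
    (hD : (Nat.card (ball S 0 (2 * R)) : ℝ) ≤ D * Nat.card (ball S p R)) :
    ∑ᶠ x ∈ ball S p R, (f x - (∑ᶠ y ∈ ball S p R, f y) / (Nat.card (ball S p R) : ℝ)) ^ 2 ≤
      4 * D * R ^ 2 * dirichletEnergy S (ball S p (3 * R)) f := by
  classical
  have hBfin := ball_finite hS p R
  have hDfin := ball_finite hS 0 (2 * R)
  set B := hBfin.toFinset
  set D₂ := hDfin.toFinset
  simp only [Nat.card_coe_set_eq, Set.ncard_eq_toFinset_card _ hBfin,
    Set.ncard_eq_toFinset_card _ hDfin, finsum_mem_eq_finite_toFinset_sum _ hBfin] at hD ⊢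
  have hB : (0 : ℝ) < #B := by
    refine Nat.cast_pos.2 (card_pos.2 ⟨p, hBfin.mem_toFinset.2 ?_⟩)
    simpa [ball, wdist_self] using hR
  have hreindex : ∀ x ∈ B, ∑ y ∈ B, (f x - f y) ^ 2 ≤ ∑ d ∈ D₂, (f (x + d) - f x) ^ 2 := by
    intro x hx
    calc ∑ y ∈ B, (f x - f y) ^ 2 = ∑ d ∈ B.image (· - x), (f (x + d) - f x) ^ 2 := by
          rw [sum_image fun _ _ _ _ h => sub_left_injective h]
          exact sum_congr rfl fun y _ => by rw [add_sub_cancel]; ring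
      _ ≤ ∑ d ∈ D₂, (f (x + d) - f x) ^ 2 := by
          refine sum_le_sum_of_subset_of_nonneg (fun d hd => ?_) fun _ _ _ => sq_nonneg _
          obtain ⟨y, hy, rfl⟩ := mem_image.1 hd
          rw [hDfin.mem_toFinset, two_mul]
          exact sub_mem_ball_zero hsym hS (hBfin.mem_toFinset.1 hx) (hBfin.mem_toFinset.1 hy)
  have hsum := sum_sum_sq_sub_le hS f (fun x hx => hBfin.mem_toFinset.1 hx)
    (fun d hd => hDfin.mem_toFinset.1 (hd : d ∈ D₂))
  rw [show R + 2 * R = 3 * R by ring] at hsum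
  have hE := dirichletEnergy_nonneg (S := S) (ball S p (3 * R)) f
  calc _ ≤ (∑ x ∈ B, ∑ y ∈ B, (f x - f y) ^ 2) / #B := sum_sq_sub_average_le B f
    _ ≤ (2 * R) ^ 2 * #D₂ * dirichletEnergy S (ball S p (3 * R)) f / #B := by
        gcongr
        exact (sum_le_sum hreindex).trans hsum
    _ ≤ (2 * R) ^ 2 * (D * #B) * dirichletEnergy S (ball S p (3 * R)) f / #B := by gcongr
    _ = 4 * D * R ^ 2 * dirichletEnergy S (ball S p (3 * R)) f := by
        field_simp
        ring

end

section

variable {m : ℕ} {T : Type} [AddCommGroup T] {S : Multiset ((Fin m → ℤ) × T)}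

theorem abs_fst_apply_le (hS : AddSubmonoid.closure {s | s ∈ S} = ⊤) {K : ℕ}
    (hK : ∀ s ∈ S, ∀ j, |s.1 j| ≤ K) (g : (Fin m → ℤ) × T) (j : Fin m) :
    |g.1 j| ≤ wdist S 0 g * K := by
  obtain ⟨w, hwS, hw⟩ := exists_geodesic hS 0 g
  rw [zero_add] at hw
  calc |g.1 j| = |∑ i ∈ range (wdist S 0 g), (w i).1 j| := by
        conv_lhs => rw [← hw, Prod.fst_sum, Finset.sum_apply]
    _ ≤ ∑ i ∈ range (wdist S 0 g), |(w i).1 j| := abs_sum_le_sum_abs _ _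
    _ ≤ ∑ i ∈ range (wdist S 0 g), (K : ℤ) :=
        sum_le_sum fun i hi => hK _ (hwS i (mem_range.1 hi)) j
    _ = wdist S 0 g * K := by simp

theorem card_ball_zero_le [Finite T] (hS : AddSubmonoid.closure {s | s ∈ S} = ⊤) {K : ℕ}
    (hK : ∀ s ∈ S, ∀ j, |s.1 j| ≤ K) (r : ℝ) :
    Nat.card (ball S 0 r) ≤ (2 * ⌊r⌋₊ * K + 1) ^ m * Nat.card T := by
  have := Fintype.ofFinite T
  set N : ℤ := ⌊r⌋₊ * K
  have hsub :
      ball S 0 r ⊆ ↑((Fintype.piFinset fun _ : Fin m => Icc (-N) N) ×ˢ (univ : Finset T)) := by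
    intro g (hg : (wdist S 0 g : ℝ) ≤ r)
    simp only [coe_product, coe_univ, Set.mem_prod, mem_coe, Fintype.mem_piFinset, mem_Icc,
      ← abs_le, Set.mem_univ, and_true]
    intro j
    refine (abs_fst_apply_le hS hK g j).trans ?_
    have : wdist S 0 g ≤ ⌊r⌋₊ := Nat.le_floor hg
    simp only [N]
    gcongr
  rw [Nat.card_coe_set_eq]
  refine (Set.ncard_le_ncard hsub).trans_eq ?_
  rw [Set.ncard_coe_finset, card_product, Fintype.card_piFinset, Int.card_Icc, prod_const,
    card_univ, Fintype.card_fin, card_univ, Nat.card_eq_fintype_card,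
    show N + 1 - -N = ((2 * ⌊r⌋₊ * K + 1 : ℕ) : ℤ) by push_cast [N]; ring, Int.toNat_natCast]

theorem pow_le_card_ball (hS : AddSubmonoid.closure {s | s ∈ S} = ⊤) {D : ℕ}
    (hD : ∀ j, wdist S 0 (Pi.single j 1, 0) ≤ D) (p : (Fin m → ℤ) × T) {R : ℝ} {N : ℕ}
    (hN : (m * D * N : ℝ) ≤ R) :
    (N + 1) ^ m ≤ Nat.card (ball S p R) := by
  have := (ball_finite hS p R).to_subtype
  let box : (Fin m → Fin (N + 1)) → (Fin m → ℤ) × T := fun a => (fun j => (a j : ℤ), 0)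
  have hbox : ∀ a, box a = ∑ j, ∑ _t ∈ range (a j), ((Pi.single j 1, 0) : (Fin m → ℤ) × T) := by
    intro a
    ext k
    · simp [box, Prod.fst_sum, Finset.sum_apply, Pi.single_apply]
    · simp [box, Prod.snd_sum]
  have hmem : ∀ a, p + box a ∈ ball S p R := by
    intro a
    have hdist : wdist S p (p + box a) ≤ m * D * N := by
      rw [wdist_eq_wdist_zero_sub, add_sub_cancel_left, hbox]
      calc _ ≤ ∑ j, ∑ _t ∈ range (a j), wdist S 0 ((Pi.single j 1, 0) : (Fin m → ℤ) × T) :=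
            (wdist_zero_sum_le hS _ _).trans (sum_le_sum fun j _ => wdist_zero_sum_le hS _ _)
        _ ≤ ∑ _j : Fin m, N * D := by
            gcongr with j
            rw [sum_const, card_range, smul_eq_mul]
            exact Nat.mul_le_mul (Nat.lt_succ_iff.1 (a j).isLt) (hD j)
        _ = m * D * N := by simp [mul_comm, mul_left_comm]
    show (wdist S p (p + box a) : ℝ) ≤ R
    exact le_trans (by exact_mod_cast hdist) hN
  have hinj : Function.Injective fun a => (⟨p + box a, hmem a⟩ : ball S p R) := by
    intro a b hab
    funext j
    have := congrFun (congrArg Prod.fst (add_left_cancel (Subtype.ext_iff.1 hab))) j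
    exact Fin.ext (by simpa [box] using this)
  simpa using Nat.card_le_card_of_injective _ hinj

theorem exists_card_ball_two_mul_le [Finite T] (hS : AddSubmonoid.closure {s | s ∈ S} = ⊤) :
    ∃ C : ℝ, 0 < C ∧ ∀ (p : (Fin m → ℤ) × T) (R : ℝ), 0 ≤ R →
      (Nat.card (ball S 0 (2 * R)) : ℝ) ≤ C * Nat.card (ball S p R) := by
  classical
  obtain ⟨K, hK⟩ : ∃ K : ℕ, ∀ s ∈ S, ∀ j, |s.1 j| ≤ K := by
    refine ⟨S.toFinset.sup fun s => univ.sup fun j => (s.1 j).natAbs, fun s hs j => ?_⟩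
    rw [Int.abs_eq_natAbs, Nat.cast_le]
    exact (le_sup (f := fun j => (s.1 j).natAbs) (mem_univ j)).trans
      (le_sup (f := fun s => univ.sup fun j => (s.1 j).natAbs) (Multiset.mem_toFinset.2 hs))
  set D := univ.sup fun j : Fin m => wdist S 0 ((Pi.single j 1, 0) : (Fin m → ℤ) × T)
  have hD : ∀ j, wdist S 0 ((Pi.single j 1, 0) : (Fin m → ℤ) × T) ≤ D := fun j =>
    le_sup (f := fun j : Fin m => wdist S 0 ((Pi.single j 1, 0) : (Fin m → ℤ) × T)) (mem_univ j)
  set c : ℝ := m * D + 1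
  have hc : 0 < c := by positivity
  refine ⟨(4 * c * K + 1) ^ m * Nat.card T, mul_pos (by positivity) (mod_cast Nat.card_pos),
    fun p R hR => ?_⟩
  set N := ⌊R / c⌋₊
  have hN : (m * D * N : ℝ) ≤ R := by
    have : (N : ℝ) ≤ R / c := Nat.floor_le (by positivity)
    rw [le_div_iff₀ hc] at this
    nlinarith [Nat.cast_nonneg (α := ℝ) N]
  have hRN : R < c * (N + 1) := by
    have := Nat.lt_floor_add_one (R / c)
    rwa [div_lt_iff₀ hc, mul_comm] at this
  have hside : ((2 * ⌊2 * R⌋₊ * K + 1 : ℕ) : ℝ) ≤ (4 * c * K + 1) * (N + 1) := by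
    -- `⌊2R⌋₊ ≤ 2R < 2c(N + 1)` and `1 ≤ N + 1`
    have : (⌊2 * R⌋₊ : ℝ) ≤ 2 * R := Nat.floor_le (by positivity)
    push_cast
    nlinarith [Nat.cast_nonneg (α := ℝ) K, Nat.cast_nonneg (α := ℝ) N]
  calc (Nat.card (ball S 0 (2 * R)) : ℝ)
      ≤ ((2 * ⌊2 * R⌋₊ * K + 1 : ℕ) : ℝ) ^ m * Nat.card T := by
        exact_mod_cast card_ball_zero_le hS hK (2 * R)
    _ ≤ ((4 * c * K + 1) * (N + 1)) ^ m * Nat.card T := by gcongr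
    _ = (4 * c * K + 1) ^ m * Nat.card T * ((N + 1 : ℕ) ^ m : ℕ) := by
        rw [mul_pow]; push_cast; ring
    _ ≤ (4 * c * K + 1) ^ m * Nat.card T * Nat.card (ball S p R) := by
        gcongr
        exact pow_le_card_ball hS hD p hN

end

end CayleyGraph

/-- **Poincaré inequality** (Lemma 3.1). There is a constant `C = C(m,S)` such that for every
`p ∈ G`, `R > 0` and every `f`,
`Σ_{x ∈ B_R(p)} (f(x) - f_{B_R})² ≤ C R² Σ_{x,y ∈ B_{3R}(p), x ~ y} (f(x) - f(y))²`,
where `f_{B_R}` is the average of `f` over `B_R(p)` and neighbors are counted with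
multiplicity. -/
theorem poincare_inequality (m l : ℕ) (q : Fin l → ℕ) (hq : ∀ i, IsPrimePow (q i))
    (S : Multiset (AbG m l q))
    (hsym : S.map (fun s => -s) = S)
    (hgen : AddSubgroup.closure {s : AbG m l q | s ∈ S} = ⊤) :
    ∃ C : ℝ, 0 < C ∧ ∀ (p : AbG m l q) (R : ℝ), 0 < R → ∀ f : AbG m l q → ℝ,
      ∑ᶠ x ∈ ball S p R,
          (f x - (∑ᶠ y ∈ ball S p R, f y) / (Nat.card ↥(ball S p R) : ℝ)) ^ 2
        ≤ C * R ^ 2 * ∑ᶠ x ∈ ball S p (3 * R),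
            (S.map fun s =>
              Set.indicator (ball S p (3 * R)) (fun y => (f y - f x) ^ 2) (x + s)).sum := by
  have : ∀ i, NeZero (q i) := fun i => ⟨(hq i).pos.ne'⟩
  have hS := CayleyGraph.addSubmonoid_closure_eq_top hsym hgen
  obtain ⟨D, hD, hdoubling⟩ := CayleyGraph.exists_card_ball_two_mul_le hS
  exact ⟨4 * D, by positivity, fun p R hR f =>
    CayleyGraph.poincare_of_card_ball_le hsym hS p hR.le f (hdoubling p R hR.le)⟩
end

section
/- Let S be a finite symmetric generating set of ℤ^m and k ≥ 2. Then the discrete Laplacian L^S : P^k(ℤ^m) → P^{k-2}(ℤ^m) is a surjective linear map: for every polynomial g of degree at most k−2 restricted to ℤ^m, there exists a polynomial f of degree at most k restricted to ℤ^m with L^S f = g. -/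
/-!
On polynomials the Laplacian is `Δ = ∑_{s ∈ S} (τ_s - 1)`, where `τ_s P = P(X + s)`. Each difference
`τ_s - 1` lowers the degree, and since `S = -S` the identity `(τ_s - 1) + (τ_{-s} - 1) =
-(τ_s - 1)(τ_{-s} - 1)` shows that `Δ` lowers it by two.

For surjectivity use the Fischer inner product `⟨P, Q⟩ = ∑_α α! P_α Q_α`, in which `X i` is
adjoint to `∂ᵢ`. Then `τ_s = exp (∑ sᵢ ∂ᵢ)` is adjoint to multiplication by `exp (∑ sᵢ Xᵢ)`, and
comparing degrees gives `2 ⟨Δ P, Q⟩ = ⟨P, q Q⟩` for `P` homogeneous of degree `n + 2` and `Q` of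
degree `n`, where `q = ∑_{s ∈ S} (∑ sᵢ Xᵢ)²`. So if the degree-`n` part of `Δ (q h)` vanishes for
a homogeneous `h` of degree `n`, then `⟨q h, q h⟩ = 0` and `h = 0`, because `q ≠ 0` (some
`s ∈ S` is nonzero as `S` generates `ℤ^m`). The map `h ↦ [Δ (q h)]ₙ` is thus bijective on
homogeneous polynomials of degree `n`, and induction on the degree takes care of the lower terms.
-/

open MvPolynomial

/-- `P^k(Z^m)`: restrictions to `Z^m` of real polynomials on `R^m` of degree at most `k`. -/
noncomputable def PolySet (m k : Nat) : Set ((Fin m -> Int) -> Real) :=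
  {u | exists P : MvPolynomial (Fin m) Real, P.totalDegree <= k /\
        forall x : Fin m -> Int, u x = MvPolynomial.eval (fun i => (x i : Real)) P}

namespace MvPolynomial

noncomputable section

section Degree

variable {σ R : Type*} [CommSemiring R]

theorem restrictTotalDegree_mono {m n : ℕ} (h : m ≤ n) :
    restrictTotalDegree σ R m ≤ restrictTotalDegree σ R n :=
  fun _ hp => (mem_restrictTotalDegree _ _ _).2 (((mem_restrictTotalDegree _ _ _).1 hp).trans h)

theorem mem_of_homogeneousComponent_mem {p : Submodule R (MvPolynomial σ R)}
    {P : MvPolynomial σ R} {n : ℕ} (hP : P.totalDegree ≤ n)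
    (h : ∀ j ≤ n, homogeneousComponent j P ∈ p) : P ∈ p := by
  rw [← sum_homogeneousComponent P]
  exact Submodule.sum_mem _ fun j hj => h j (by rw [Finset.mem_range] at hj; omega)

end Degree

section Translate

variable {σ R : Type*} [CommRing R]

def translate (s : σ → R) : MvPolynomial σ R →ₐ[R] MvPolynomial σ R :=
  aeval fun i => X i + C (s i)

@[simp]
theorem translate_X (s : σ → R) (i : σ) : translate s (X i) = X i + C (s i) :=
  aeval_X _ _

@[simp]
theorem translate_C (s : σ → R) (c : R) : translate s (C c) = C c :=
  aeval_C _ _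

theorem translate_zero : translate (0 : σ → R) = AlgHom.id R (MvPolynomial σ R) := by
  ext i; simp

theorem translate_translate (a b : σ → R) (P : MvPolynomial σ R) :
    translate a (translate b P) = translate (a + b) P := by
  rw [← AlgHom.comp_apply]
  congr 1
  ext i
  simp [add_assoc]

theorem eval_translate (v s : σ → R) (P : MvPolynomial σ R) :
    eval v (translate s P) = eval (v + s) P := by
  induction P using MvPolynomial.induction_on with
  | C a => simp
  | add p q hp hq => simp [hp, hq]
  | mul_X p i hp => simp [hp]

theorem degree_lt_of_mem_support_translate_monomial_sub (s : σ → R) (α : σ →₀ ℕ)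
    {d : σ →₀ ℕ} (hd : d ∈ (translate s (monomial α 1) - monomial α 1).support) :
    d.degree < α.degree := by
  classical
  induction hn : α.degree generalizing α d with
  | zero =>
    obtain rfl := (Finsupp.degree_eq_zero_iff α).1 hn
    simp at hd
  | succ n ih =>
    obtain ⟨i, hi⟩ : ∃ i, α i ≠ 0 := by
      by_contra! h
      simp [(Finsupp.degree_eq_zero_iff α).2 (Finsupp.ext h)] at hn
    obtain ⟨β, rfl⟩ : ∃ β, α = β + Finsupp.single i 1 :=
      ⟨α - Finsupp.single i 1, (tsub_add_cancel_of_le (Finsupp.single_le_iff.2 (by omega))).symm⟩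
    rw [map_add, Finsupp.degree_single] at hn
    rw [show monomial (β + Finsupp.single i 1) (1 : R) = monomial β 1 * X i by
      rw [X, monomial_mul, mul_one]] at hd
    have hsplit : translate s (monomial β 1 * X i) - monomial β 1 * X i
        = (X i + C (s i)) * (translate s (monomial β 1) - monomial β 1)
          + C (s i) * monomial β 1 := by
      rw [map_mul, translate_X]
      ring
    rw [hsplit] at hd
    rcases Finset.mem_union.1 (support_add hd) with hd | hd
    · obtain ⟨d₁, hd₁, d₂, hd₂, rfl⟩ := Finset.mem_add.1 (support_mul _ _ hd)
      have hlin : (X i + C (s i) : MvPolynomial σ R).totalDegree ≤ 1 :=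
        (totalDegree_add _ _).trans <| max_le ((totalDegree_monomial_le _ _).trans_eq (by simp))
          ((totalDegree_C _).trans_le zero_le_one)
      have h₁ : d₁.degree ≤ 1 := (le_totalDegree hd₁).trans hlin
      have h₂ := ih β hd₂ (by omega)
      rw [map_add]
      omega
    · rw [C_mul_monomial] at hd
      obtain rfl := Finset.mem_singleton.1 (support_monomial_subset hd)
      omega

theorem totalDegree_translate_sub_le (s : σ → R) (P : MvPolynomial σ R) :
    (translate s P - P).totalDegree ≤ P.totalDegree - 1 := by
  have hsum : translate s P - P
      = ∑ α ∈ P.support, coeff α P • (translate s (monomial α 1) - monomial α 1) := by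
    conv_lhs => rw [P.as_sum]
    simp only [map_sum, ← Finset.sum_sub_distrib, smul_sub, ← map_smul, smul_eq_mul, mul_one]
  rw [hsum]
  refine totalDegree_finsetSum_le fun α hα => (totalDegree_smul_le _ _).trans <|
    Finset.sup_le fun d hd => ?_
  have h₁ := degree_lt_of_mem_support_translate_monomial_sub s α hd
  have h₂ : α.degree ≤ P.totalDegree := le_totalDegree hα
  change d.degree ≤ _
  omega

theorem totalDegree_translate_le (s : σ → R) (P : MvPolynomial σ R) :
    (translate s P).totalDegree ≤ P.totalDegree := by
  rw [← add_sub_cancel P (translate s P)]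
  exact (totalDegree_add _ _).trans
    (max_le le_rfl ((totalDegree_translate_sub_le s P).trans (Nat.sub_le _ _)))

end Translate

section Fischer

variable {σ : Type*}

theorem sum_support_mul_coeff_of_subset (f : (σ →₀ ℕ) → ℝ) {Q : MvPolynomial σ ℝ}
    {t : Finset (σ →₀ ℕ)} (h : Q.support ⊆ t) :
    ∑ α ∈ Q.support, f α * coeff α Q = ∑ α ∈ t, f α * coeff α Q :=
  Finset.sum_subset h fun α _ hα => by rw [notMem_support_iff.1 hα, mul_zero]

variable [Fintype σ]

def fischer : MvPolynomial σ ℝ →ₗ[ℝ] MvPolynomial σ ℝ →ₗ[ℝ] ℝ :=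
  LinearMap.mk₂ ℝ
    (fun P Q => ∑ α ∈ Q.support, (∏ i, ((α i).factorial : ℝ)) * coeff α P * coeff α Q)
    (fun P₁ P₂ Q => by simp only [coeff_add, mul_add, add_mul, Finset.sum_add_distrib])
    (fun c P Q => by
      simp only [coeff_smul, smul_eq_mul, Finset.mul_sum]
      exact Finset.sum_congr rfl fun _ _ => by ring)
    (fun P Q₁ Q₂ => by
      classical
      rw [sum_support_mul_coeff_of_subset _ support_add,
        sum_support_mul_coeff_of_subset _ Finset.subset_union_left,
        sum_support_mul_coeff_of_subset _ Finset.subset_union_right, ← Finset.sum_add_distrib]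
      simp only [coeff_add, mul_add])
    (fun c P Q => by
      rw [sum_support_mul_coeff_of_subset _ support_smul, smul_eq_mul, Finset.mul_sum]
      exact Finset.sum_congr rfl fun _ _ => by rw [coeff_smul, smul_eq_mul]; ring)

theorem fischer_apply (P Q : MvPolynomial σ ℝ) :
    fischer P Q = ∑ α ∈ Q.support, (∏ i, ((α i).factorial : ℝ)) * coeff α P * coeff α Q :=
  rfl

theorem fischer_monomial_right (P : MvPolynomial σ ℝ) (β : σ →₀ ℕ) (b : ℝ) :
    fischer P (monomial β b) = (∏ i, ((β i).factorial : ℝ)) * coeff β P * b := by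
  classical
  rw [fischer_apply, sum_support_mul_coeff_of_subset _ support_monomial_subset,
    Finset.sum_singleton, coeff_monomial, if_pos rfl]

theorem prod_factorial_add_single (β : σ →₀ ℕ) (i : σ) :
    ∏ j, (((β + Finsupp.single i 1 : σ →₀ ℕ) j).factorial : ℝ)
      = (∏ j, ((β j).factorial : ℝ)) * (β i + 1) := by
  classical
  have h : ∀ j, (((β + Finsupp.single i 1 : σ →₀ ℕ) j).factorial : ℝ)
      = (β j).factorial * if j = i then (β i + 1 : ℝ) else 1 := by
    intro j
    by_cases hj : j = i
    · subst hj; simp [Nat.factorial_succ, mul_comm]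
    · simp [hj]
  rw [Finset.prod_congr rfl fun j _ => h j, Finset.prod_mul_distrib, Finset.prod_ite_eq']
  simp

theorem fischer_X_mul (i : σ) (u v : MvPolynomial σ ℝ) :
    fischer (X i * u) v = fischer u (pderiv i v) := by
  classical
  induction v using MvPolynomial.induction_on' with
  | add p q hp hq => rw [map_add, map_add, map_add, hp, hq]
  | monomial β b =>
    rw [pderiv_monomial, fischer_monomial_right, fischer_monomial_right, coeff_X_mul']
    by_cases hβ : β i = 0
    · simp [hβ]
    · obtain ⟨γ, rfl⟩ : ∃ γ, β = γ + Finsupp.single i 1 :=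
        ⟨β - Finsupp.single i 1,
          (tsub_add_cancel_of_le (Finsupp.single_le_iff.2 (Nat.one_le_iff_ne_zero.2 hβ))).symm⟩
      rw [if_pos (Finsupp.mem_support_iff.2 hβ), add_tsub_cancel_right,
        prod_factorial_add_single]
      simp only [Finsupp.add_apply, Finsupp.single_eq_same]
      push_cast
      ring

theorem fischer_self_pos {P : MvPolynomial σ ℝ} (hP : P ≠ 0) : 0 < fischer P P := by
  rw [fischer_apply]
  refine Finset.sum_pos (fun α hα => ?_) (support_nonempty.2 hP)
  rw [mul_assoc]
  exact mul_pos (Finset.prod_pos fun i _ => by positivity)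
    (mul_self_pos.2 (mem_support_iff.1 hα))

theorem fischer_eq_zero_of_coeff_eq_zero {P Q : MvPolynomial σ ℝ}
    (h : ∀ α ∈ Q.support, coeff α P = 0) : fischer P Q = 0 :=
  (fischer_apply P Q).trans <| Finset.sum_eq_zero fun α hα => by rw [h α hα, mul_zero, zero_mul]

theorem fischer_eq_zero_of_totalDegree_lt {P Q : MvPolynomial σ ℝ} {n : ℕ}
    (hP : P.totalDegree < n) (hQ : Q.IsHomogeneous n) : fischer P Q = 0 :=
  fischer_eq_zero_of_coeff_eq_zero fun _ hα =>
    coeff_eq_zero_of_totalDegree_lt (hQ.degree_eq_sum_deg_support hα ▸ hP)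

theorem fischer_eq_zero_of_isHomogeneous {P Q : MvPolynomial σ ℝ} {k n : ℕ}
    (hP : P.IsHomogeneous k) (hQ : Q.IsHomogeneous n) (hkn : k ≠ n) : fischer P Q = 0 :=
  fischer_eq_zero_of_coeff_eq_zero fun _ hα =>
    hP.coeff_eq_zero fun h => hkn (h.symm.trans (hQ.degree_eq_sum_deg_support hα).symm)

theorem fischer_homogeneousComponent_left {Q : MvPolynomial σ ℝ} {n : ℕ}
    (hQ : Q.IsHomogeneous n) (P : MvPolynomial σ ℝ) :
    fischer (homogeneousComponent n P) Q = fischer P Q := by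
  rw [← sub_eq_zero, ← LinearMap.sub_apply, ← map_sub]
  refine fischer_eq_zero_of_coeff_eq_zero fun α hα => ?_
  have hα' : α.degree = n := (hQ.degree_eq_sum_deg_support hα).symm
  rw [coeff_sub, coeff_homogeneousComponent, if_pos hα', sub_self]

end Fischer

section FischerTranslate

variable {σ : Type*} [Fintype σ]

def linearForm (s : σ → ℝ) : MvPolynomial σ ℝ :=
  ∑ i, C (s i) * X i

theorem pderiv_linearForm (s : σ → ℝ) (i : σ) : pderiv i (linearForm s) = C (s i) := by
  classical
  simp [linearForm, pderiv_X, Pi.single_apply]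

theorem isHomogeneous_linearForm (s : σ → ℝ) : (linearForm s).IsHomogeneous 1 :=
  IsHomogeneous.sum _ _ _ fun i _ => isHomogeneous_C_mul_X _ i

theorem fischer_translate_of_isHomogeneous_succ (s : σ → ℝ) {d : ℕ} {P : MvPolynomial σ ℝ}
    (hP : P.IsHomogeneous (d + 1)) (Q : MvPolynomial σ ℝ) :
    (d + 1 : ℝ) * fischer (translate s P) Q
      = ∑ i, (fischer (translate s (pderiv i P)) (pderiv i Q)
          + s i * fischer (translate s (pderiv i P)) Q) := by
  have hEuler : (d + 1 : ℝ) • P = ∑ i, X i * pderiv i P := by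
    rw [hP.sum_X_mul_pderiv, ← Nat.cast_smul_eq_nsmul ℝ]
    push_cast
    rfl
  rw [← smul_eq_mul, ← LinearMap.smul_apply, ← map_smul, ← map_smul, hEuler, map_sum, map_sum,
    LinearMap.sum_apply]
  refine Finset.sum_congr rfl fun i _ => ?_
  rw [map_mul, translate_X, add_mul, map_add, LinearMap.add_apply, fischer_X_mul, C_mul',
    map_smul, LinearMap.smul_apply, smul_eq_mul]

theorem fischer_of_isHomogeneous_succ {d : ℕ} {P : MvPolynomial σ ℝ}
    (hP : P.IsHomogeneous (d + 1)) (Q : MvPolynomial σ ℝ) :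
    (d + 1 : ℝ) * fischer P Q = ∑ i, fischer (pderiv i P) (pderiv i Q) := by
  simpa [translate_zero] using fischer_translate_of_isHomogeneous_succ 0 hP Q

/-- The degree-`j` component of the adjointness of `translate s = exp (∑ sᵢ ∂ᵢ)` and
multiplication by `exp (linearForm s)`. -/
theorem factorial_mul_fischer_translate (s : σ → ℝ) {n j : ℕ} {P Q : MvPolynomial σ ℝ}
    (hP : P.IsHomogeneous (n + j)) (hQ : Q.IsHomogeneous n) :
    (j.factorial : ℝ) * fischer (translate s P) Q = fischer P (linearForm s ^ j * Q) := by
  induction hd : n + j using Nat.strong_induction_on generalizing n j P Q with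
  | _ d ih =>
  rcases d with _ | d
  · obtain ⟨rfl, rfl⟩ : n = 0 ∧ j = 0 := by omega
    rw [totalDegree_eq_zero_iff_eq_C.1 (Nat.le_zero.1 hP.totalDegree_le)]
    simp
  rw [hd] at hP
  have hPi (i : σ) : (pderiv i P).IsHomogeneous d := by simpa using hP.pderiv (i := i)
  refine mul_left_cancel₀ d.cast_add_one_ne_zero ?_
  rw [mul_left_comm, fischer_translate_of_isHomogeneous_succ s hP,
    fischer_of_isHomogeneous_succ hP, Finset.mul_sum]
  refine Finset.sum_congr rfl fun i _ => ?_
  have h₁ : (j.factorial : ℝ) * fischer (translate s (pderiv i P)) (pderiv i Q)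
      = fischer (pderiv i P) (linearForm s ^ j * pderiv i Q) := by
    rcases n with _ | n
    · rw [totalDegree_eq_zero_iff_eq_C.1 (Nat.le_zero.1 hQ.totalDegree_le), pderiv_C]
      simp
    · exact ih (n + j) (by omega) (by rw [show n + j = d by omega]; exact hPi i)
        (by simpa using hQ.pderiv (i := i)) rfl
  have h₂ : (j.factorial : ℝ) * (s i * fischer (translate s (pderiv i P)) Q)
      = fischer (pderiv i P) (pderiv i (linearForm s ^ j) * Q) := by
    rcases j with _ | j
    · rw [fischer_eq_zero_of_totalDegree_lt _ hQ]
      · simp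
      · exact ((totalDegree_translate_le s _).trans (hPi i).totalDegree_le).trans_lt (by omega)
    · rw [pderiv_pow, pderiv_linearForm, Nat.add_sub_cancel,
        show (↑(j + 1) * linearForm s ^ j * C (s i) * Q : MvPolynomial σ ℝ)
          = C ((j + 1 : ℕ) * s i) * (linearForm s ^ j * Q) by
            simp only [map_mul, map_natCast]; ring,
        C_mul', map_smul, smul_eq_mul,
        ← ih (n + j) (by omega) (by rw [show n + j = d by omega]; exact hPi i) hQ rfl,
        Nat.factorial_succ]
      push_cast
      ring
  rw [pderiv_mul, map_add, mul_add, h₁, h₂, add_comm]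

end FischerTranslate

section Laplacian

variable {σ : Type*}

def polyLaplacian (S : Multiset (σ → ℝ)) : MvPolynomial σ ℝ →ₗ[ℝ] MvPolynomial σ ℝ :=
  (S.map fun s => (translate s).toLinearMap - LinearMap.id).sum

theorem polyLaplacian_apply (S : Multiset (σ → ℝ)) (P : MvPolynomial σ ℝ) :
    polyLaplacian S P = (S.map fun s => translate s P - P).sum := by
  rw [polyLaplacian, ← LinearMap.applyₗ_apply_apply, map_multiset_sum, Multiset.map_map]
  rfl

theorem totalDegree_polyLaplacian_le {S : Multiset (σ → ℝ)} (hS : S.map (fun s => -s) = S)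
    (P : MvPolynomial σ ℝ) : (polyLaplacian S P).totalDegree ≤ P.totalDegree - 2 := by
  have hpair (s : σ → ℝ) : translate s P - P + (translate (-s) P - P)
      = -(translate s (translate (-s) P - P) - (translate (-s) P - P)) := by
    rw [map_sub, translate_translate, add_neg_cancel, translate_zero]
    simp only [AlgHom.id_apply]
    ring
  have hsum : (2 : ℝ) • polyLaplacian S P
      = (S.map fun s => translate s P - P + (translate (-s) P - P)).sum := by
    have hneg : (S.map fun s => translate (-s) P - P) = S.map fun s => translate s P - P := by
      conv_rhs => rw [← hS, Multiset.map_map]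
      rfl
    rw [two_smul, Multiset.sum_map_add, polyLaplacian_apply, hneg]
  rw [← mem_restrictTotalDegree, ← Submodule.smul_mem_iff _ (two_ne_zero : (2 : ℝ) ≠ 0), hsum]
  refine multiset_sum_mem _ fun _ hs => ?_
  obtain ⟨s, -, rfl⟩ := Multiset.mem_map.1 hs
  rw [mem_restrictTotalDegree, hpair, totalDegree_neg]
  have := totalDegree_translate_sub_le (-s) P
  exact (totalDegree_translate_sub_le s _).trans (by omega)

variable [Fintype σ]

def symbol (S : Multiset (σ → ℝ)) : MvPolynomial σ ℝ :=
  (S.map fun s => linearForm s ^ 2).sum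

theorem isHomogeneous_symbol (S : Multiset (σ → ℝ)) : (symbol S).IsHomogeneous 2 := by
  rw [← mem_homogeneousSubmodule]
  refine multiset_sum_mem _ fun _ hs => ?_
  obtain ⟨s, -, rfl⟩ := Multiset.mem_map.1 hs
  exact (isHomogeneous_linearForm s).pow 2

theorem symbol_ne_zero {S : Multiset (σ → ℝ)} (h : ∃ s ∈ S, s ≠ 0) : symbol S ≠ 0 := by
  obtain ⟨s₀, hs₀, hne⟩ := h
  have hform : 0 < ∑ i, s₀ i * s₀ i := by
    obtain ⟨i, hi⟩ := Function.ne_iff.1 hne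
    exact Finset.sum_pos' (fun j _ => mul_self_nonneg _) ⟨i, Finset.mem_univ _, mul_self_pos.2 hi⟩
  have heval : (∑ i, s₀ i * s₀ i) ^ 2 ≤ eval s₀ (symbol S) := by
    have hnonneg : ∀ x ∈ S.map (fun s => eval s₀ (linearForm s ^ 2)), 0 ≤ x := by
      simp only [Multiset.mem_map, map_pow]
      rintro _ ⟨s, -, rfl⟩
      exact sq_nonneg _
    have := Multiset.single_le_sum hnonneg _ (Multiset.mem_map_of_mem _ hs₀)
    rw [symbol, map_multiset_sum, Multiset.map_map]
    simpa [linearForm] using this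
  intro h0
  rw [h0, map_zero] at heval
  nlinarith

theorem two_mul_fischer_polyLaplacian (S : Multiset (σ → ℝ)) {n : ℕ} {P Q : MvPolynomial σ ℝ}
    (hP : P.IsHomogeneous (n + 2)) (hQ : Q.IsHomogeneous n) :
    2 * fischer (polyLaplacian S P) Q = fischer P (symbol S * Q) := by
  have h (s : σ → ℝ) : 2 * fischer (translate s P - P) Q = fischer P (linearForm s ^ 2 * Q) := by
    rw [map_sub, LinearMap.sub_apply, fischer_eq_zero_of_isHomogeneous hP hQ (by omega), sub_zero,
      ← factorial_mul_fischer_translate s hP hQ]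
    norm_num
  rw [polyLaplacian_apply, ← LinearMap.flip_apply, map_multiset_sum, Multiset.map_map,
    ← Multiset.sum_map_mul_left, symbol, ← Multiset.sum_map_mul_right, map_multiset_sum,
    Multiset.map_map]
  exact congrArg Multiset.sum (Multiset.map_congr rfl fun s _ => h s)

end Laplacian

section Surjectivity

variable {σ : Type*} [Fintype σ] {S : Multiset (σ → ℝ)}

theorem exists_isHomogeneous_homogeneousComponent_polyLaplacian_eq (hq : symbol S ≠ 0)
    {n : ℕ} {G : MvPolynomial σ ℝ} (hG : G.IsHomogeneous n) :
    ∃ h : MvPolynomial σ ℝ, h.IsHomogeneous n ∧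
      homogeneousComponent n (polyLaplacian S (symbol S * h)) = G := by
  let H := homogeneousSubmodule σ ℝ n
  have : FiniteDimensional ℝ H := Submodule.finiteDimensional_of_le
    (S₂ := restrictTotalDegree σ ℝ n) fun p hp =>
      (mem_restrictTotalDegree _ _ _).2 ((mem_homogeneousSubmodule _ _).1 hp).totalDegree_le
  let Ψ : H →ₗ[ℝ] H := (homogeneousComponent n).codRestrict H (homogeneousComponent_mem n) ∘ₗ
    polyLaplacian S ∘ₗ LinearMap.mulLeft ℝ (symbol S) ∘ₗ H.subtype
  have hΨ : Function.Injective Ψ := by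
    refine (injective_iff_map_eq_zero Ψ).2 fun ⟨h, hh⟩ hΨh => Subtype.ext ?_
    rw [mem_homogeneousSubmodule] at hh
    have hqh : (symbol S * h).IsHomogeneous (n + 2) := by
      simpa [add_comm] using (isHomogeneous_symbol S).mul hh
    have h0 : fischer (symbol S * h) (symbol S * h) = 0 := by
      rw [← two_mul_fischer_polyLaplacian S hqh hh, ← fischer_homogeneousComponent_left hh]
      simp [show homogeneousComponent n (polyLaplacian S (symbol S * h)) = 0 from
        congrArg Subtype.val hΨh]
    by_contra hne
    exact (fischer_self_pos (mul_ne_zero hq hne)).ne' h0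
  obtain ⟨h, hh⟩ := LinearMap.injective_iff_surjective.1 hΨ ⟨G, hG⟩
  exact ⟨h, h.2, congrArg Subtype.val hh⟩

theorem mem_map_polyLaplacian_of_isHomogeneous (hS : S.map (fun s => -s) = S)
    (hq : symbol S ≠ 0) {n : ℕ} {G : MvPolynomial σ ℝ} (hG : G.IsHomogeneous n) :
    G ∈ (restrictTotalDegree σ ℝ (n + 2)).map (polyLaplacian S) := by
  induction n using Nat.strong_induction_on generalizing G with
  | _ n ih =>
  obtain ⟨h, hh, hcomp⟩ := exists_isHomogeneous_homogeneousComponent_polyLaplacian_eq hq hG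
  have hf : symbol S * h ∈ restrictTotalDegree σ ℝ (n + 2) := by
    rw [mem_restrictTotalDegree, add_comm]
    exact ((isHomogeneous_symbol S).mul hh).totalDegree_le
  have hrest : G - polyLaplacian S (symbol S * h)
      ∈ (restrictTotalDegree σ ℝ (n + 2)).map (polyLaplacian S) := by
    refine mem_of_homogeneousComponent_mem (n := n) ?_ fun j hj => ?_
    · refine (totalDegree_sub _ _).trans (max_le hG.totalDegree_le ?_)
      exact (totalDegree_polyLaplacian_le hS _).trans
        (Nat.sub_le_of_le_add ((mem_restrictTotalDegree _ _ _).1 hf))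
    · rcases hj.lt_or_eq with hj | rfl
      · exact Submodule.map_mono (restrictTotalDegree_mono (by omega))
          (ih j hj (homogeneousComponent_isHomogeneous j _))
      · rw [map_sub, hcomp, homogeneousComponent_eq_self hG, sub_self]
        exact zero_mem _
  simpa using add_mem (Submodule.mem_map_of_mem hf) hrest

theorem mem_map_polyLaplacian_of_totalDegree_le (hS : S.map (fun s => -s) = S)
    (hq : symbol S ≠ 0) {n : ℕ} {g : MvPolynomial σ ℝ} (hg : g.totalDegree ≤ n) :
    g ∈ (restrictTotalDegree σ ℝ (n + 2)).map (polyLaplacian S) :=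
  mem_of_homogeneousComponent_mem hg fun j hj =>
    Submodule.map_mono (restrictTotalDegree_mono (by omega))
      (mem_map_polyLaplacian_of_isHomogeneous hS hq (homogeneousComponent_isHomogeneous j g))

end Surjectivity

end

end MvPolynomial

theorem exists_mem_ne_zero_of_closure_eq_top {G : Type*} [AddGroup G] [Nontrivial G] {s : Set G}
    (h : AddSubgroup.closure s = ⊤) : ∃ x ∈ s, x ≠ 0 := by
  by_contra! h'
  exact bot_ne_top ((AddSubgroup.closure_eq_bot_iff.2 fun x hx => h' x hx).symm.trans h)

theorem lap_eval_eq_eval_polyLaplacian {σ : Type} (S : Multiset (σ → ℤ))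
    (P : MvPolynomial σ ℝ) (x : σ → ℤ) :
    lap S (fun y : σ → ℤ => eval (fun i => (y i : ℝ)) P) x
      = eval (fun i => (x i : ℝ)) (polyLaplacian (S.map fun s i => (s i : ℝ)) P) := by
  rw [polyLaplacian_apply, map_multiset_sum, Multiset.map_map, Multiset.map_map]
  refine congrArg Multiset.sum (Multiset.map_congr rfl fun s _ => ?_)
  simp [eval_translate, Pi.add_def]

/-- **Surjectivity of the discrete Laplacian on polynomials** (Corollary 5.4). For any finite
symmetric generating set `S` of `ℤ^m` and `k ≥ 2`, the linear map
`L^S : P^k(ℤ^m) → P^{k-2}(ℤ^m)` is well defined and surjective. -/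
theorem lap_surjective_on_polynomials (m : ℕ) (hm : 1 ≤ m) (S : Multiset (Fin m → ℤ))
    (hsym : S.map (fun s => -s) = S)
    (hgen : AddSubgroup.closure {s : Fin m → ℤ | s ∈ S} = ⊤)
    (k : ℕ) (hk : 2 ≤ k) :
    (∀ f ∈ PolySet m k, lap S f ∈ PolySet m (k - 2)) ∧
    ∀ g ∈ PolySet m (k - 2), ∃ f ∈ PolySet m k, lap S f = g := by
  set SR := S.map fun s i => (s i : ℝ)
  have hSR : SR.map (fun s => -s) = SR := by
    simp only [SR, Multiset.map_map]
    conv_rhs => rw [← hsym, Multiset.map_map]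
    congr 1
    ext s i
    simp
  have hq : symbol SR ≠ 0 := by
    have : Nonempty (Fin m) := Fin.pos_iff_nonempty.1 hm
    obtain ⟨s, hs, hne⟩ := exists_mem_ne_zero_of_closure_eq_top hgen
    refine symbol_ne_zero ⟨_, Multiset.mem_map_of_mem _ hs, fun h => hne (funext fun i => ?_)⟩
    simpa using congrFun h i
  have hlap (P : MvPolynomial (Fin m) ℝ) : lap S (fun x => eval (fun i => (x i : ℝ)) P)
      = fun x => eval (fun i => (x i : ℝ)) (polyLaplacian SR P) :=
    funext (lap_eval_eq_eval_polyLaplacian S P)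
  refine ⟨?_, ?_⟩
  · rintro f ⟨P, hP, hf⟩
    obtain rfl : f = _ := funext hf
    exact ⟨_, (totalDegree_polyLaplacian_le hSR P).trans (by omega), fun x => congrFun (hlap P) x⟩
  · rintro g ⟨G, hG, hg⟩
    obtain ⟨F, hF, hFG⟩ := Submodule.mem_map.1 (mem_map_polyLaplacian_of_totalDegree_le hSR hq hG)
    rw [mem_restrictTotalDegree] at hF
    exact ⟨_, ⟨F, by omega, fun _ => rfl⟩, by rw [hlap, hFG]; exact (funext hg).symm⟩
end
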